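/- arXiv:2402.06612 — 6 statements merged into one kernel-verified Lean document; each statement's English description precedes it below -/
import Mathlib

section
/- Let w be a right-infinite word over a finite alphabet Σ = {x_1, …, x_m}. Then the monomial algebra A_w admits a faithful right point module. Explicitly, the graded right module P = ⊕_{i≥0} F·e_i with action e_i · x_j = e_{i+1} if x_j = w[i] and e_i · x_j = 0 otherwise is a well-defined point A_w-module whose annihilator in A_w is zero. -/
noncomputable section

open scoped BigOperators

/-- The free associative `F`-algebra on `m` generators, realized as the monoid
algebra of the free monoid on `Fin m`. -/
abbrev FreeAlg (F : Type) [Field F] (m : ℕ) : Type :=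
  MonoidAlgebra F (FreeMonoid (Fin m))

variable (F : Type) [Field F] {m : ℕ}

/-- The element of the free algebra corresponding to a word `u`. -/
def wordElem (u : List (Fin m)) : FreeAlg F m :=
  MonoidAlgebra.of F (FreeMonoid (Fin m)) (FreeMonoid.ofList u)

/-- The relation identifying the forbidden words in `W` with `0`. -/
def monRel (W : Set (List (Fin m))) : FreeAlg F m → FreeAlg F m → Prop :=
  fun a b => (∃ u ∈ W, a = wordElem F u) ∧ b = 0

/-- The monomial algebra `F⟨x_1,…,x_m⟩/⟨W⟩` determined by the set `W` of forbidden
words. -/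
abbrev MonAlg (W : Set (List (Fin m))) : Type :=
  RingQuot (monRel F W)

/-- The canonical projection from the free algebra onto the monomial algebra. -/
def monAlgPi (W : Set (List (Fin m))) : FreeAlg F m →ₐ[F] MonAlg F W :=
  RingQuot.mkAlgHom F (monRel F W)

/-- The image of the word `u` in the monomial algebra; `u` is a *nonzero monomial*
of the monomial algebra iff `mono F W u ≠ 0`. -/
def mono (W : Set (List (Fin m))) (u : List (Fin m)) : MonAlg F W :=
  monAlgPi F W (wordElem F u)

/-- The degree-`d` homogeneous component of the monomial algebra, spanned by the
images of the words of length `d`. -/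
def homog (W : Set (List (Fin m))) (d : ℕ) : Submodule F (MonAlg F W) :=
  Submodule.span F { a | ∃ u : List (Fin m), u.length = d ∧ a = mono F W u }
/-- The right action of a single word on the graded vector space `⊕_{i≥0} F·e_i`,
where the letter `x_j` acts by `e_i · x_j = lam i j • e_{i+1}`. -/
def ptAct (lam : ℕ → Fin m → F) : List (Fin m) → ((ℕ →₀ F) →ₗ[F] (ℕ →₀ F))
  | [] => LinearMap.id
  | j :: u => (ptAct lam u).comp (Finsupp.lsum F fun i => lam i j • Finsupp.lsingle (i + 1))

/-- The linear extension of the right action to the whole free algebra. -/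
def algAct (lam : ℕ → Fin m → F) (a : FreeAlg F m) : (ℕ →₀ F) →ₗ[F] (ℕ →₀ F) :=
  Finsupp.sum a.coeff fun u c => c • ptAct F lam (FreeMonoid.toList u)

/-- The basis vector `e_i` of the point module. -/
def eVec (i : ℕ) : ℕ →₀ F := Finsupp.single i 1

/-- The scalar data `lam` defines a (right) point module over the monomial algebra
with forbidden words `W`: the action of the free algebra descends to the quotient,
and the module is generated by `e_0`.  (The homogeneous components `F·e_i` are
one-dimensional by construction.) -/
structure IsPointModule (W : Set (List (Fin m))) (lam : ℕ → Fin m → F) : Prop where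
  welldef : ∀ a : FreeAlg F m, monAlgPi F W a = 0 → algAct F lam a = 0
  cyclic : ∀ v : ℕ →₀ F, ∃ a : FreeAlg F m, algAct F lam a (eVec F 0) = v

/-- The point module given by `lam` is faithful: the only element of the monomial
algebra annihilating it is `0`. -/
def IsFaithfulPM (W : Set (List (Fin m))) (lam : ℕ → Fin m → F) : Prop :=
  ∀ a : FreeAlg F m, algAct F lam a = 0 → monAlgPi F W a = 0

/-- The annihilator in the monomial algebra of the point module given by `lam`. -/
def annSet (W : Set (List (Fin m))) (lam : ℕ → Fin m → F) : Set (MonAlg F W) :=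
  { x | ∀ a : FreeAlg F m, monAlgPi F W a = x → algAct F lam a = 0 }
/-- The set of finite factors (subwords) of the right-infinite word `w`. -/
def factorsOf (w : ℕ → Fin m) : Set (List (Fin m)) :=
  { u | ∃ i : ℕ, u = (List.range u.length).map fun k => w (i + k) }

/-- `w` is uniformly recurrent: every factor `u` of `w` occurs in every sufficiently
long factor of `w`. -/
def UniformlyRecurrent (w : ℕ → Fin m) : Prop :=
  ∀ u ∈ factorsOf w, ∃ C : ℕ, ∀ v ∈ factorsOf w, v.length = C → u <:+: v

/-- `w` is eventually periodic. -/
def EventuallyPeriodic (w : ℕ → Fin m) : Prop :=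
  ∃ p : ℕ, 0 < p ∧ ∃ N : ℕ, ∀ i : ℕ, N ≤ i → w (i + p) = w i

/-!
A word `u` sends `e_i` to `e_{i+|u|}` if `u` occurs in `w` at position `i`, and to `0` otherwise.
Hence non-factors of `w` act by zero, so the action descends to `A_w`, and `e_n = e_0 · w[0,n)`.
Moreover the `e_{i+n}`-coordinate of `e_i · a` is the coefficient in `a` of the factor of
length `n` at position `i`; so if `a` annihilates the module, no factor of `w` occurs in the
support of `a`, which means that `a` vanishes in `A_w`.
-/

theorem ptAct_append (lam : ℕ → Fin m → F) (u v : List (Fin m)) :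
    ptAct F lam (u ++ v) = (ptAct F lam v).comp (ptAct F lam u) := by
  induction u with
  | nil => rfl
  | cons j u ih => rw [List.cons_append, ptAct, ptAct, ih, LinearMap.comp_assoc]

/-- Words act on the right, hence through the opposite of the endomorphism monoid. -/
def ptActMonoidHom (lam : ℕ → Fin m → F) :
    FreeMonoid (Fin m) →* (Module.End F (ℕ →₀ F))ᵐᵒᵖ where
  toFun u := .op (ptAct F lam (FreeMonoid.toList u))
  map_one' := rfl
  map_mul' u v := by
    rw [← MulOpposite.op_mul, Module.End.mul_eq_comp, ← ptAct_append]
    rfl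

def algActAlgHom (lam : ℕ → Fin m → F) : FreeAlg F m →ₐ[F] (Module.End F (ℕ →₀ F))ᵐᵒᵖ :=
  MonoidAlgebra.lift F _ (FreeMonoid (Fin m)) (ptActMonoidHom F lam)

theorem unop_algActAlgHom (lam : ℕ → Fin m → F) (a : FreeAlg F m) :
    (algActAlgHom F lam a).unop = algAct F lam a := by
  rw [algActAlgHom, MonoidAlgebra.lift_apply, algAct, Finsupp.sum, Finsupp.sum,
    Finset.unop_sum]
  rfl

theorem algAct_zero (lam : ℕ → Fin m → F) : algAct F lam 0 = 0 := by
  rw [← unop_algActAlgHom, map_zero, MulOpposite.unop_zero]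

theorem algAct_add (lam : ℕ → Fin m → F) (a b : FreeAlg F m) :
    algAct F lam (a + b) = algAct F lam a + algAct F lam b := by
  simp only [← unop_algActAlgHom, map_add, MulOpposite.unop_add]

theorem algAct_single (lam : ℕ → Fin m → F) (u : FreeMonoid (Fin m)) (c : F) :
    algAct F lam (MonoidAlgebra.single u c) = c • ptAct F lam (FreeMonoid.toList u) := by
  rw [algAct, MonoidAlgebra.coeff_single, Finsupp.sum_single_index (by simp)]

theorem algAct_wordElem (lam : ℕ → Fin m → F) (u : List (Fin m)) :
    algAct F lam (wordElem F u) = ptAct F lam u := by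
  rw [wordElem, MonoidAlgebra.of_apply, algAct_single, one_smul, FreeMonoid.toList_ofList]

theorem algAct_eq_zero_of_monAlgPi_eq_zero (W : Set (List (Fin m))) (lam : ℕ → Fin m → F)
    (hW : ∀ u ∈ W, ptAct F lam u = 0) {a : FreeAlg F m} (ha : monAlgPi F W a = 0) :
    algAct F lam a = 0 := by
  have hrel : ∀ ⦃x y : FreeAlg F m⦄, monRel F W x y →
      algActAlgHom F lam x = algActAlgHom F lam y := by
    rintro _ _ ⟨⟨u, hu, rfl⟩, rfl⟩
    rw [map_zero, ← MulOpposite.unop_inj, unop_algActAlgHom, algAct_wordElem, hW u hu,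
      MulOpposite.unop_zero]
  have hlift := RingQuot.liftAlgHom_mkAlgHom_apply F (algActAlgHom F lam) hrel a
  rw [← monAlgPi, ha, map_zero] at hlift
  rw [← unop_algActAlgHom, ← hlift, MulOpposite.unop_zero]

theorem mono_eq_zero_of_mem (W : Set (List (Fin m))) {u : List (Fin m)} (hu : u ∈ W) :
    mono F W u = 0 := by
  rw [mono, monAlgPi, RingQuot.mkAlgHom_rel F (s := monRel F W) ⟨⟨u, hu, rfl⟩, rfl⟩, map_zero]

theorem monAlgPi_eq_zero_of_support (W : Set (List (Fin m))) (a : FreeAlg F m)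
    (h : ∀ u ∈ a.coeff.support, FreeMonoid.toList u ∈ W) : monAlgPi F W a = 0 := by
  rw [← MonoidAlgebra.sum_coeff_single a, map_finsuppSum]
  refine Finset.sum_eq_zero fun u hu => ?_
  show monAlgPi F W (MonoidAlgebra.single u (a.coeff u)) = 0
  have hsingle :
      MonoidAlgebra.single u (a.coeff u) = a.coeff u • wordElem F (FreeMonoid.toList u) := by
    rw [wordElem, MonoidAlgebra.of_apply, FreeMonoid.ofList_toList, MonoidAlgebra.smul_single,
      smul_eq_mul, mul_one]
  rw [hsingle, map_smul, ← mono, mono_eq_zero_of_mem F W (h u hu), smul_zero]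

def window (w : ℕ → Fin m) (i n : ℕ) : List (Fin m) :=
  (List.range n).map fun k => w (i + k)

@[simp] theorem window_length (w : ℕ → Fin m) (i n : ℕ) : (window w i n).length = n := by
  simp [window]

theorem window_succ (w : ℕ → Fin m) (i n : ℕ) :
    window w i (n + 1) = w i :: window w (i + 1) n := by
  simp only [window, List.range_succ_eq_map, List.map_cons, List.map_map, add_zero]
  congr 1
  exact List.map_congr_left fun k _ => by simp only [Function.comp_apply]; congr 1; omega

def wordLam (w : ℕ → Fin m) : ℕ → Fin m → F := fun i j => if w i = j then 1 else 0

theorem ptAct_wordLam_single (w : ℕ → Fin m) (u : List (Fin m)) (i : ℕ) (c : F) :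
    ptAct F (wordLam F w) u (Finsupp.single i c) =
      if u = window w i u.length then Finsupp.single (i + u.length) c else 0 := by
  induction u generalizing i with
  | nil => simp [ptAct, window]
  | cons j u ih =>
    rw [ptAct, LinearMap.comp_apply, Finsupp.lsum_single, LinearMap.smul_apply,
      Finsupp.lsingle_apply, Finsupp.smul_single, List.length_cons, window_succ, wordLam]
    by_cases hj : w i = j
    · subst hj
      simp only [if_true, one_smul, ih, List.cons.injEq, true_and, Nat.add_right_comm i 1,
        Nat.add_assoc]
    · simp [hj, Ne.symm hj]

theorem ptAct_wordLam_eq_zero (w : ℕ → Fin m) {u : List (Fin m)} (hu : u ∉ factorsOf w) :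
    ptAct F (wordLam F w) u = 0 := by
  refine Finsupp.lhom_ext fun i c => ?_
  rw [ptAct_wordLam_single, if_neg (fun h => hu ⟨i, h⟩ : u ≠ window w i u.length),
    LinearMap.zero_apply]

theorem ptAct_wordLam_single_apply (w : ℕ → Fin m) (u : List (Fin m)) (i n : ℕ) (c : F) :
    ptAct F (wordLam F w) u (Finsupp.single i c) (i + n) = if u = window w i n then c else 0 := by
  rw [ptAct_wordLam_single]
  by_cases hu : u = window w i n
  · subst hu
    simp
  · rw [if_neg hu]
    split_ifs with hwin
    · rw [Finsupp.single_apply, if_neg]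
      rintro hn
      exact hu (by rw [hwin, Nat.add_left_cancel hn])
    · rfl

theorem algAct_wordLam_single_apply (w : ℕ → Fin m) (a : FreeAlg F m) (i n : ℕ) :
    algAct F (wordLam F w) a (Finsupp.single i 1) (i + n) =
      a.coeff (FreeMonoid.ofList (window w i n)) := by
  classical
  rw [algAct, ← Finsupp.sum_ite_self_eq' a.coeff]
  simp only [Finsupp.sum, LinearMap.sum_apply, Finsupp.finsetSum_apply,
    LinearMap.smul_apply, Finsupp.smul_apply, ptAct_wordLam_single_apply, smul_eq_mul, mul_ite,
    mul_one, mul_zero]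
  exact Finset.sum_congr rfl fun u _ => if_congr FreeMonoid.toList.eq_symm_apply.symm rfl rfl

theorem isPointModule_wordLam (w : ℕ → Fin m) :
    IsPointModule F (factorsOf w)ᶜ (wordLam F w) where
  welldef _ := algAct_eq_zero_of_monAlgPi_eq_zero F _ _ fun _ hu => ptAct_wordLam_eq_zero F w hu
  cyclic v := by
    induction v using Finsupp.induction_linear with
    | zero => exact ⟨0, by rw [algAct_zero, LinearMap.zero_apply]⟩
    | add v₁ v₂ h₁ h₂ =>
      obtain ⟨a₁, rfl⟩ := h₁
      obtain ⟨a₂, rfl⟩ := h₂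
      exact ⟨a₁ + a₂, by rw [algAct_add, LinearMap.add_apply]⟩
    | single n c =>
      refine ⟨MonoidAlgebra.single (FreeMonoid.ofList (window w 0 n)) c, ?_⟩
      rw [algAct_single, FreeMonoid.toList_ofList, LinearMap.smul_apply, eVec,
        ptAct_wordLam_single, window_length, if_pos rfl, zero_add, Finsupp.smul_single_one]

theorem isFaithfulPM_wordLam (w : ℕ → Fin m) : IsFaithfulPM F (factorsOf w)ᶜ (wordLam F w) := by
  intro a ha
  refine monAlgPi_eq_zero_of_support F _ a fun u hu ⟨i, hi⟩ => Finsupp.mem_support_iff.mp hu ?_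
  have hu_window : u = FreeMonoid.ofList (window w i (FreeMonoid.toList u).length) :=
    FreeMonoid.toList.eq_symm_apply.mpr hi
  rw [hu_window, ← algAct_wordLam_single_apply, ha]
  rfl

/-- For every right-infinite word `w` over the alphabet
`{x_1,…,x_m}`, the monomial algebra `A_w` (with forbidden words the non-factors
of `w`) admits a faithful right point module; explicitly, the module
`P = ⊕_{i≥0} F·e_i` with `e_i · x_j = e_{i+1}` if `x_j = w[i]` and `e_i · x_j = 0`
otherwise is a well-defined point `A_w`-module with zero annihilator. -/
theorem statement0 (F : Type) [Field F] (m : ℕ) (w : ℕ → Fin m) :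
    IsPointModule F ((factorsOf w)ᶜ)
        (fun i j => if w i = j then (1 : F) else 0) ∧
      IsFaithfulPM F ((factorsOf w)ᶜ)
        (fun i j => if w i = j then (1 : F) else 0) :=
  ⟨isPointModule_wordLam F w, isFaithfulPM_wordLam F w⟩
end
end

section
/- Let A be a connected ℕ-graded F-algebra with finite-dimensional homogeneous components that is generated in degree 1. If A has exponential growth, then the quotient A/pro(A) also has exponential growth. Equivalently, if limsup_n (dim_F ⊕_{i≤n} (A/pro(A))_i)^{1/n} ≤ 1 then limsup_n (dim_F ⊕_{i≤n} A_i)^{1/n} ≤ 1. -/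
noncomputable section

open scoped BigOperators

variable (F : Type) [Field F] {m : ℕ}

/-- The right prolongable radical of a graded algebra `A` with grading `𝒜`:
the set of `f ∈ A` with `f · A_d = 0` for some `d ≥ 1`. -/
def proSet (A : Type) [Ring A] [Algebra F A] (𝒜 : ℕ → Submodule F A) : Set A :=
  { f | ∃ d : ℕ, 1 ≤ d ∧ ∀ g ∈ 𝒜 d, f * g = 0 }

/-- The left prolongable radical of a graded algebra `A` with grading `𝒜`:
the set of `f ∈ A` with `A_d · f = 0` for some `d ≥ 1`. -/
def proSetLeft (A : Type) [Ring A] [Algebra F A] (𝒜 : ℕ → Submodule F A) : Set A :=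
  { f | ∃ d : ℕ, 1 ≤ d ∧ ∀ g ∈ 𝒜 d, g * f = 0 }

/-- A monomial algebra is (right) prolongable if every nonzero monomial has a
nonzero proper right prolongation. -/
def Prolongable (W : Set (List (Fin m))) : Prop :=
  ∀ u : List (Fin m), mono F W u ≠ 0 → ∃ v : List (Fin m), v ≠ [] ∧ mono F W (u ++ v) ≠ 0

/-!
Let `P` be the span of `pro(A)`, `a_i = dim A_i` and `b_i = dim (A/P)_i`. For fixed `n` the
finite-dimensional space `P ∩ A_n` is killed on the right by a single `A_D`, hence by every `A_m`
with `m ≥ D`. A complement `C` of `P ∩ A_n` in `A_n` has dimension `b_n`, and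
`A_{n+m} = A_n A_m = C A_m`, so `a_{n+m} ≤ b_n a_m` for `m ≥ D`. If `A/P` has subexponential
growth, then for each `c > 1` some `n` has `b_n < c^n`, and this recursion gives `a_i = O(c^i)`.
-/

open Filter Finset Module

namespace Submodule

variable {K : Type*} [Field K] {A : Type*} [Ring A] [Algebra K A]

def rightAnnihilator (W : Submodule K A) : Submodule K A where
  carrier := {f | ∀ g ∈ W, f * g = 0}
  add_mem' hf hf' g hg := by rw [add_mul, hf g hg, hf' g hg, add_zero]
  zero_mem' g _ := zero_mul g
  smul_mem' c f hf g hg := by rw [smul_mul_assoc, hf g hg, smul_zero]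

theorem le_rightAnnihilator_iff {N W : Submodule K A} : N ≤ rightAnnihilator W ↔ N * W = ⊥ := by
  rw [eq_bot_iff, mul_le]
  simp only [mem_bot]
  rfl

theorem rightAnnihilator_le_mul (V W : Submodule K A) :
    rightAnnihilator V ≤ rightAnnihilator (V * W) := by
  rw [le_rightAnnihilator_iff, ← mul_assoc, le_rightAnnihilator_iff.mp le_rfl, bot_mul]

theorem finrank_mul_le (V W : Submodule K A) [FiniteDimensional K V] [FiniteDimensional K W] :
    finrank K ↥(V * W) ≤ finrank K V * finrank K W := by
  rw [← mulMap_range, ← finrank_tensorProduct]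
  exact LinearMap.finrank_range_le _

instance finiteDimensional_mul (V W : Submodule K A) [FiniteDimensional K V]
    [FiniteDimensional K W] : FiniteDimensional K ↥(V * W) := by
  rw [← mulMap_range]
  infer_instance

theorem exists_le_sup_inf_finrank_le_map_mkQ {E : Type*} [AddCommGroup E] [Module K E]
    (N V : Submodule K E) [FiniteDimensional K V] :
    ∃ C ≤ V, V ≤ C ⊔ N ⊓ V ∧ finrank K C ≤ finrank K (V.map N.mkQ) := by
  obtain ⟨q, hq⟩ := (N.comap V.subtype).exists_isCompl
  refine ⟨q.map V.subtype, map_subtype_le V q, fun y hy => ?_, le_of_eq ?_⟩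
  · obtain ⟨a, ha, b, hb, hab⟩ := mem_sup.mp (hq.sup_eq_top.ge (mem_top : (⟨y, hy⟩ : V) ∈ ⊤))
    rw [sup_comm]
    refine mem_sup.mpr ⟨a, ⟨ha, a.2⟩, b, mem_map_of_mem hb, ?_⟩
    exact congrArg Subtype.val hab
  · have hker : LinearMap.ker (N.mkQ ∘ₗ V.subtype) = N.comap V.subtype := by
      rw [LinearMap.ker_comp, ker_mkQ]
    have hrange : LinearMap.range (N.mkQ ∘ₗ V.subtype) = V.map N.mkQ := by
      rw [LinearMap.range_comp, range_subtype]
    have h1 := LinearMap.finrank_range_add_finrank_ker (N.mkQ ∘ₗ V.subtype)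
    have h2 := finrank_add_eq_of_isCompl hq
    rw [hker, hrange] at h1
    rw [finrank_map_subtype_eq]
    omega

theorem finrank_mul_le_of_inf_le_rightAnnihilator {N V W : Submodule K A}
    [FiniteDimensional K V] [FiniteDimensional K W] (h : N ⊓ V ≤ rightAnnihilator W) :
    finrank K ↥(V * W) ≤ finrank K (V.map N.mkQ) * finrank K W := by
  obtain ⟨C, hCV, hVC, hC⟩ := exists_le_sup_inf_finrank_le_map_mkQ N V
  have : FiniteDimensional K C := finiteDimensional_of_le hCV
  have hle : V * W ≤ C * W := calc
    V * W ≤ (C ⊔ N ⊓ V) * W := mul_le_mul_left hVC W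
    _ = C * W := by rw [sup_mul, le_rightAnnihilator_iff.mp h, sup_bot_eq]
  calc finrank K ↥(V * W) ≤ finrank K ↥(C * W) := finrank_mono hle
    _ ≤ finrank K C * finrank K W := finrank_mul_le C W
    _ ≤ _ := Nat.mul_le_mul_right _ hC

end Submodule

section GradedByPowers

variable {K : Type*} [Field K] {A : Type*} [Ring A] [Algebra K A] (𝒜 : ℕ → Submodule K A)

theorem eq_pow_of_succ_eq_mul (h0 : 𝒜 0 = 1) (hsucc : ∀ n, 𝒜 (n + 1) = 𝒜 n * 𝒜 1) (n : ℕ) :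
    𝒜 n = 𝒜 1 ^ n := by
  induction n with
  | zero => rw [h0, pow_zero]
  | succ n ih => rw [hsucc, ih, pow_succ]

theorem add_eq_mul_of_succ_eq_mul (h0 : 𝒜 0 = 1) (hsucc : ∀ n, 𝒜 (n + 1) = 𝒜 n * 𝒜 1)
    (n m : ℕ) : 𝒜 (n + m) = 𝒜 n * 𝒜 m := by
  rw [eq_pow_of_succ_eq_mul 𝒜 h0 hsucc (n + m), eq_pow_of_succ_eq_mul 𝒜 h0 hsucc n,
    eq_pow_of_succ_eq_mul 𝒜 h0 hsucc m, pow_add]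

theorem monotone_rightAnnihilator_of_succ_eq_mul (h0 : 𝒜 0 = 1)
    (hsucc : ∀ n, 𝒜 (n + 1) = 𝒜 n * 𝒜 1) : Monotone fun d => (𝒜 d).rightAnnihilator := by
  intro d d' hd
  obtain ⟨e, rfl⟩ := Nat.exists_eq_add_of_le hd
  simp only [add_eq_mul_of_succ_eq_mul 𝒜 h0 hsucc d e]
  exact Submodule.rightAnnihilator_le_mul _ _

end GradedByPowers

section ProlongableRadical

variable {K : Type} [Field K] {A : Type} [Ring A] [Algebra K A] (𝒜 : ℕ → Submodule K A)

theorem exists_le_rightAnnihilator_of_le_span_proSet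
    (hmono : Monotone fun d => (𝒜 d).rightAnnihilator) {V : Submodule K A} (hV : V.FG)
    (hVP : V ≤ Submodule.span K (proSet K A 𝒜)) : ∃ D, V ≤ (𝒜 D).rightAnnihilator := by
  have hP : Submodule.span K (proSet K A 𝒜) ≤ ⨆ d, (𝒜 d).rightAnnihilator :=
    Submodule.span_le.mpr fun f ⟨d, _, hf⟩ => Submodule.mem_iSup_of_mem d hf
  obtain ⟨_, ⟨D, rfl⟩, hD⟩ :=
    (CompleteLattice.isCompactElement_iff_le_of_directed_sSup_le (α := Submodule K A) V).mp
      ((Submodule.fg_iff_compact V).mp hV) _ (Set.range_nonempty _)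
      hmono.directed_le.directedOn_range (hVP.trans hP)
  exact ⟨D, hD⟩

theorem exists_finrank_add_le_mul (hfin : ∀ d, Module.Finite K (𝒜 d))
    (h0 : 𝒜 0 = 1) (hsucc : ∀ n, 𝒜 (n + 1) = 𝒜 n * 𝒜 1) (n : ℕ) :
    ∃ D, ∀ m ≥ D, finrank K (𝒜 (n + m)) ≤
      finrank K ((𝒜 n).map (Submodule.span K (proSet K A 𝒜)).mkQ) * finrank K (𝒜 m) := by
  have hmono := monotone_rightAnnihilator_of_succ_eq_mul 𝒜 h0 hsucc
  have : FiniteDimensional K ↥(Submodule.span K (proSet K A 𝒜) ⊓ 𝒜 n) :=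
    Submodule.finiteDimensional_of_le inf_le_right
  obtain ⟨D, hD⟩ := exists_le_rightAnnihilator_of_le_span_proSet 𝒜 hmono
    (Module.Finite.iff_fg.mp this) inf_le_left
  refine ⟨D, fun m hm => ?_⟩
  have := hfin n
  have := hfin m
  rw [add_eq_mul_of_succ_eq_mul 𝒜 h0 hsucc]
  exact Submodule.finrank_mul_le_of_inf_le_rightAnnihilator (hD.trans (hmono hm))

end ProlongableRadical

section Growth

theorem Real.isBoundedUnder_of_limsup_ne_zero {ι : Type*} {l : Filter ι} {u : ι → ℝ}
    (h : limsup u l ≠ 0) : IsBoundedUnder (· ≤ ·) l u := by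
  by_contra hu
  exact h (Real.limsup_of_not_isBoundedUnder hu)

theorem limsup_rpow_inv_le_one_of_eventually_le_pow {f : ℕ → ℕ}
    (h : ∀ c > 1, ∀ᶠ N in atTop, (f N : ℝ) ≤ c ^ N) :
    limsup (fun N => (f N : ℝ) ^ (N : ℝ)⁻¹) atTop ≤ 1 := by
  refine le_of_forall_gt_imp_ge_of_dense fun c hc => ?_
  refine limsup_le_of_le (isCoboundedUnder_le_of_le atTop fun N => by positivity) ?_
  filter_upwards [h c hc, eventually_ge_atTop 1] with N hN hN1
  calc (f N : ℝ) ^ (N : ℝ)⁻¹ ≤ (c ^ N) ^ (N : ℝ)⁻¹ := by gcongr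
    _ = c := Real.pow_rpow_inv_natCast (by linarith) (by omega)

theorem eventually_lt_pow_of_limsup_rpow_inv_le_one {f : ℕ → ℕ}
    (hbdd : IsBoundedUnder (· ≤ ·) atTop fun N => (f N : ℝ) ^ (N : ℝ)⁻¹)
    (h : limsup (fun N => (f N : ℝ) ^ (N : ℝ)⁻¹) atTop ≤ 1) {c : ℝ} (hc : 1 < c) :
    ∀ᶠ N in atTop, (f N : ℝ) < c ^ N := by
  filter_upwards [eventually_lt_of_limsup_lt (h.trans_lt hc) hbdd, eventually_ge_atTop 1]
    with N hN hN1
  calc (f N : ℝ) = ((f N : ℝ) ^ (N : ℝ)⁻¹) ^ N :=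
        (Real.rpow_inv_natCast_pow (by positivity) (by omega)).symm
    _ < c ^ N := by gcongr

theorem exists_le_mul_pow_of_le_mul {a : ℕ → ℕ} {n D B : ℕ} (hn : n ≠ 0)
    (h : ∀ m ≥ D, a (n + m) ≤ B * a m) {c : ℝ} (hc : 1 ≤ c) (hB : (B : ℝ) ≤ c ^ n) :
    ∃ M : ℝ, ∀ i, (a i : ℝ) ≤ M * c ^ i := by
  set M := ∑ j ∈ range (D + n), (a j : ℝ)
  refine ⟨M, fun i => ?_⟩
  induction i using Nat.strong_induction_on with
  | _ i ih =>
  rcases lt_or_ge i (D + n) with hi | hi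
  · calc (a i : ℝ) ≤ M :=
          single_le_sum (f := fun j => (a j : ℝ)) (fun _ _ => by positivity) (mem_range.mpr hi)
      _ ≤ M * c ^ i := le_mul_of_one_le_right (by positivity) (one_le_pow₀ hc)
  · obtain ⟨m, rfl⟩ : ∃ m, i = n + m := ⟨i - n, by omega⟩
    calc (a (n + m) : ℝ) ≤ B * a m := by exact_mod_cast h m (by omega)
      _ ≤ c ^ n * (M * c ^ m) := by gcongr; exact ih m (by omega)
      _ = M * c ^ (n + m) := by ring

theorem eventually_sum_range_le_pow {a : ℕ → ℕ} {M c₀ c : ℝ} (hc₀ : 1 ≤ c₀) (hc : c₀ < c)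
    (ha : ∀ i, (a i : ℝ) ≤ M * c₀ ^ i) :
    ∀ᶠ N in atTop, ((∑ i ∈ range (N + 1), a i : ℕ) : ℝ) ≤ c ^ N := by
  have hM : 0 ≤ M := by simpa using (Nat.cast_nonneg (a 0)).trans (ha 0)
  have ht : 1 < c / c₀ := (one_lt_div (by linarith)).mpr hc
  have hlin : (fun N : ℕ => M * ((N : ℝ) + 1)) =o[atTop] fun N => (c / c₀) ^ N := by
    have := ((isLittleO_pow_const_const_pow_of_one_lt 1 ht).add
      (isLittleO_pow_const_const_pow_of_one_lt 0 ht)).const_mul_left M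
    simpa using this
  filter_upwards [hlin.eventuallyLE] with N hN
  rw [Real.norm_of_nonneg (by positivity), Real.norm_of_nonneg (by positivity)] at hN
  calc ((∑ i ∈ range (N + 1), a i : ℕ) : ℝ) ≤ ∑ _i ∈ range (N + 1), M * c₀ ^ N := by
        push_cast
        refine sum_le_sum fun i hi => (ha i).trans ?_
        gcongr
        exact Nat.lt_succ_iff.mp (mem_range.mp hi)
    _ = M * ((N : ℝ) + 1) * c₀ ^ N := by
        rw [sum_const, card_range, nsmul_eq_mul]; push_cast; ring
    _ ≤ (c / c₀) ^ N * c₀ ^ N := by gcongr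
    _ = c ^ N := by rw [← mul_pow, div_mul_cancel₀ _ (by positivity)]

end Growth

theorem statement8_general (F : Type) [Field F] (A : Type) [Ring A] [Algebra F A]
    (𝒜 : ℕ → Submodule F A)
    (hfin : ∀ d : ℕ, Module.Finite F (𝒜 d))
    (hconn : 𝒜 0 = Submodule.span F {1})
    (hgen : ∀ n : ℕ, 𝒜 (n + 1) = 𝒜 1 * 𝒜 n ∧ 𝒜 (n + 1) = 𝒜 n * 𝒜 1)
    (hexp : 1 < Filter.limsup
        (fun n : ℕ =>
          ((∑ i ∈ Finset.range (n + 1), Module.finrank F (𝒜 i) : ℕ) : ℝ) ^ ((n : ℝ)⁻¹))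
        Filter.atTop) :
    1 < Filter.limsup
        (fun n : ℕ =>
          ((∑ i ∈ Finset.range (n + 1),
              Module.finrank F
                ((𝒜 i).map (Submodule.span F (proSet F A 𝒜)).mkQ) : ℕ) : ℝ) ^ ((n : ℝ)⁻¹))
        Filter.atTop := by
  set b := fun i => finrank F ((𝒜 i).map (Submodule.span F (proSet F A 𝒜)).mkQ)
  have h0 : 𝒜 0 = 1 := hconn.trans Submodule.one_eq_span.symm
  have hsucc : ∀ n, 𝒜 (n + 1) = 𝒜 n * 𝒜 1 := fun n => (hgen n).2
  have hb : ∀ i, b i ≤ finrank F (𝒜 i) := fun i =>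
    have := hfin i
    Submodule.finrank_map_le _ _
  -- A real `limsup` is `0` on unbounded sequences, so `hexp` also bounds the growth of `A/P`;
  -- without that bound `hquot` would carry no information.
  have hbdd : IsBoundedUnder (· ≤ ·) atTop
      fun n : ℕ => ((∑ i ∈ range (n + 1), b i : ℕ) : ℝ) ^ (n : ℝ)⁻¹ :=
    (Real.isBoundedUnder_of_limsup_ne_zero (zero_lt_one.trans hexp).ne').mono_le
      (Eventually.of_forall fun n => by beta_reduce; gcongr with i; exact hb i)
  by_contra hquot
  refine hexp.not_ge (limsup_rpow_inv_le_one_of_eventually_le_pow fun c hc => ?_)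
  obtain ⟨c₀, hc₀, hc₀c⟩ := exists_between hc
  obtain ⟨n, hn, hn0⟩ := ((eventually_lt_pow_of_limsup_rpow_inv_le_one hbdd (not_lt.mp hquot)
    hc₀).and (eventually_ne_atTop 0)).exists
  have hbn : (b n : ℝ) ≤ c₀ ^ n := by
    refine le_of_lt (lt_of_le_of_lt ?_ hn)
    exact_mod_cast single_le_sum (f := b) (fun _ _ => Nat.zero_le _) (self_mem_range_succ n)
  obtain ⟨D, hD⟩ := exists_finrank_add_le_mul 𝒜 hfin h0 hsucc n
  obtain ⟨M, hM⟩ := exists_le_mul_pow_of_le_mul (a := fun i => finrank F (𝒜 i)) hn0 hD hc₀.le hbn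
  exact eventually_sum_range_le_pow hc₀.le hc₀c hM

/-- If a connected graded algebra (generated in degree 1, with
finite-dimensional homogeneous components) has exponential growth, i.e.
`limsup_n γ_A(n)^{1/n} > 1` where `γ_A(n) = dim_F ⊕_{i≤n} A_i`, then its maximal
(right) prolongable quotient `A/pro(A)` also has exponential growth. -/
theorem statement8 (F : Type) [Field F] (A : Type) [Ring A] [Algebra F A]
    (𝒜 : ℕ → Submodule F A) [GradedAlgebra 𝒜]
    (hfin : ∀ d : ℕ, Module.Finite F (𝒜 d))
    (hconn : 𝒜 0 = Submodule.span F {1})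
    (hgen : ∀ n : ℕ, 𝒜 (n + 1) = 𝒜 1 * 𝒜 n ∧ 𝒜 (n + 1) = 𝒜 n * 𝒜 1)
    (hexp : 1 < Filter.limsup
        (fun n : ℕ =>
          ((∑ i ∈ Finset.range (n + 1), Module.finrank F (𝒜 i) : ℕ) : ℝ) ^ ((n : ℝ)⁻¹))
        Filter.atTop) :
    1 < Filter.limsup
        (fun n : ℕ =>
          ((∑ i ∈ Finset.range (n + 1),
              Module.finrank F
                ((𝒜 i).map (Submodule.span F (proSet F A 𝒜)).mkQ) : ℕ) : ℝ) ^ ((n : ℝ)⁻¹))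
        Filter.atTop :=
  statement8_general F A 𝒜 hfin hconn hgen hexp
end
end

section
/- Let A be a finitely generated infinite-dimensional monomial algebra over a field F. Then A/pro_l(A) has linear growth if and only if A/pro_r(A) has linear growth. -/
noncomputable section

open scoped BigOperators

variable (F : Type) [Field F] {m : ℕ}

/-- The growth function of the quotient of the monomial algebra by the `F`-span of
a subset `P` (e.g. a prolongable radical): `n ↦ dim_F ⊕_{i≤n}` of the images of the
homogeneous components. -/
def quotGrowth (F : Type) [Field F] {m : ℕ} (W : Set (List (Fin m)))
    (P : Set (MonAlg F W)) (n : ℕ) : ℕ :=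
  ∑ i ∈ Finset.range (n + 1),
    Module.finrank F ((homog F W i).map (Submodule.span F P).mkQ)

/-!
The nonzero monomials of `A` are the words avoiding `W`; they form a factor-closed language `L`.
Modulo `pro_r(A)`, the image of the degree-`i` component has as a basis the words of `L` of length
`i` that can be prolonged to the right indefinitely (dually for `pro_l(A)`), and these counts are
monotone in `i`, so linear growth of either quotient means that the corresponding count is bounded.
If boundedly many words of each length are right prolongable, then for some `J` every right
prolongable word of length `J` has a unique right prolongable one-letter extension, and by
finiteness of the alphabet there is a lookahead `T` such that every factor of length `J + 1`
followed by `T` letters in a word of `L` is right prolongable. So a word of `L` is determined by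
its first `J` and its last `T` letters, and `L` has boundedly many words of each length.
Reversing words exchanges left and right.
-/

theorem exists_succ_le_of_bddAbove_range {r : ℕ → ℕ} (h : BddAbove (Set.range r)) :
    ∃ J, r (J + 1) ≤ r J := by
  by_contra! hlt
  obtain ⟨B, hB⟩ := h
  have h₁ : B + 1 ≤ r (B + 1) := (strictMono_nat_of_lt_succ hlt).id_le (B + 1)
  have h₂ : r (B + 1) ≤ B := hB ⟨B + 1, rfl⟩
  omega

theorem Monotone.exists_sum_range_le_mul_iff_bddAbove {r : ℕ → ℕ} (hr : Monotone r) :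
    (∃ C : ℕ, ∀ n : ℕ, 1 ≤ n → ∑ i ∈ Finset.range (n + 1), r i ≤ C * n) ↔
      BddAbove (Set.range r) := by
  constructor
  · rintro ⟨C, hC⟩
    refine ⟨2 * C, ?_⟩
    have hle : ∀ n, 1 ≤ n → r n ≤ 2 * C := by
      intro n hn
      have hsum : n * r n ≤ C * (2 * n) := calc
        n * r n = (Finset.Ico n (2 * n)).card • r n := by
          rw [Nat.card_Ico, smul_eq_mul, two_mul, Nat.add_sub_cancel]
        _ ≤ ∑ i ∈ Finset.Ico n (2 * n), r i :=
          Finset.card_nsmul_le_sum _ _ _ fun i hi => hr (Finset.mem_Ico.1 hi).1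
        _ ≤ ∑ i ∈ Finset.range (2 * n + 1), r i :=
          Finset.sum_le_sum_of_subset fun i hi => by simp at hi ⊢; omega
        _ ≤ C * (2 * n) := hC _ (by omega)
      nlinarith
    rintro _ ⟨i, rfl⟩
    exact (hr (Nat.le_succ i)).trans (hle _ (Nat.succ_pos i))
  · rintro ⟨B, hB⟩
    refine ⟨2 * B, fun n hn => ?_⟩
    calc ∑ i ∈ Finset.range (n + 1), r i ≤ ∑ _i ∈ Finset.range (n + 1), B :=
          Finset.sum_le_sum fun i _ => hB ⟨i, rfl⟩
      _ = (n + 1) * B := by simp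
      _ ≤ 2 * B * n := by nlinarith

section Words

variable {α : Type*}

def FactorClosed (L : Set (List α)) : Prop :=
  ∀ ⦃u w : List α⦄, u <:+: w → w ∈ L → u ∈ L

def RightExtendable (L : Set (List α)) (u : List α) : Prop :=
  ∀ d, ∃ v : List α, v.length = d ∧ u ++ v ∈ L

def LeftExtendable (L : Set (List α)) (u : List α) : Prop :=
  ∀ d, ∃ v : List α, v.length = d ∧ v ++ u ∈ L

def rightExtendableWords (L : Set (List α)) (i : ℕ) : Set (List α) :=
  {u | u.length = i ∧ RightExtendable L u}

def leftExtendableWords (L : Set (List α)) (i : ℕ) : Set (List α) :=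
  {u | u.length = i ∧ LeftExtendable L u}

def wordsOfLength (L : Set (List α)) (i : ℕ) : Set (List α) :=
  {u | u ∈ L ∧ u.length = i}

variable {L : Set (List α)}

theorem FactorClosed.reverse_preimage (hL : FactorClosed L) :
    FactorClosed (List.reverse ⁻¹' L) :=
  fun _ _ huw hw => hL (List.reverse_infix.2 huw) hw

theorem FactorClosed.mem_of_append_left (hL : FactorClosed L) {u v : List α}
    (h : u ++ v ∈ L) : u ∈ L :=
  hL (List.prefix_append u v).isInfix h

theorem FactorClosed.mem_of_append_right (hL : FactorClosed L) {u v : List α}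
    (h : u ++ v ∈ L) : v ∈ L :=
  hL (List.suffix_append u v).isInfix h

theorem RightExtendable.mem {u : List α} (h : RightExtendable L u) : u ∈ L := by
  obtain ⟨v, hv, huv⟩ := h 0
  rwa [List.length_eq_zero_iff.1 hv, List.append_nil] at huv

theorem leftExtendable_iff_rightExtendable_reverse {u : List α} :
    LeftExtendable L u ↔ RightExtendable (List.reverse ⁻¹' L) u.reverse := by
  refine forall_congr' fun d => ⟨fun ⟨v, hv, hvu⟩ => ⟨v.reverse, ?_, ?_⟩,
    fun ⟨v, hv, hvu⟩ => ⟨v.reverse, ?_, ?_⟩⟩ <;> simp_all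

theorem ncard_reverse_preimage (S : Set (List α)) : (List.reverse ⁻¹' S).ncard = S.ncard :=
  Set.ncard_preimage_of_injective_subset_range List.reverse_injective
    (by simp [List.reverse_surjective.range_eq])

theorem ncard_leftExtendableWords (i : ℕ) :
    (leftExtendableWords L i).ncard = (rightExtendableWords (List.reverse ⁻¹' L) i).ncard := by
  rw [← ncard_reverse_preimage (rightExtendableWords _ i)]
  congr 1
  ext u
  simp [leftExtendableWords, rightExtendableWords, leftExtendable_iff_rightExtendable_reverse]

theorem ncard_wordsOfLength_reverse_preimage (i : ℕ) :
    (wordsOfLength (List.reverse ⁻¹' L) i).ncard = (wordsOfLength L i).ncard := by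
  rw [← ncard_reverse_preimage (wordsOfLength L i)]
  congr 1
  ext u
  simp [wordsOfLength]

theorem RightExtendable.exists_append_singleton [Finite α] (hL : FactorClosed L) {u : List α}
    (h : RightExtendable L u) : ∃ a, RightExtendable L (u ++ [a]) := by
  by_contra! hnot
  simp only [RightExtendable, not_forall, not_exists, not_and] at hnot
  choose D hD using hnot
  obtain ⟨N, hN⟩ := (Set.finite_range D).bddAbove
  obtain ⟨_ | ⟨a, v⟩, hv, huv⟩ := h (N + 1)
  · simp at hv
  have hDa : D a ≤ v.length := (hN ⟨a, rfl⟩).trans (by simp at hv; omega)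
  refine hD a (v.take (D a)) (by simpa using hDa) (hL ?_ huv)
  simpa using (List.prefix_append_right_inj (u ++ [a])).2 (v.take_prefix (D a)) |>.isInfix

theorem exists_rightExtendable_of_append_mem [Finite α] (hL : FactorClosed L) (l : ℕ) :
    ∃ T, ∀ u v : List α, u.length = l → T ≤ v.length → u ++ v ∈ L → RightExtendable L u := by
  have hD : ∀ u, ¬ RightExtendable L u → ∃ d, ∀ v : List α, v.length = d → u ++ v ∉ L :=
    fun u hu => by simpa [RightExtendable] using hu
  choose! D hD using hD
  obtain ⟨T, hT⟩ := ((List.finite_length_eq α l).image D).bddAbove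
  refine ⟨T, fun u v hu hv huv => ?_⟩
  by_contra hne
  have hDu : D u ≤ v.length := (hT ⟨u, hu, rfl⟩).trans hv
  refine hD u hne (v.take (D u)) (by simpa using hDu) (hL.mem_of_append_left (v := v.drop (D u)) ?_)
  rwa [List.append_assoc, List.take_append_drop]

theorem finite_rightExtendableWords [Finite α] (i : ℕ) : (rightExtendableWords L i).Finite :=
  (List.finite_length_eq α i).subset fun _ h => h.1

theorem finite_leftExtendableWords [Finite α] (i : ℕ) : (leftExtendableWords L i).Finite :=
  (List.finite_length_eq α i).subset fun _ h => h.1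

theorem rightExtendableWords_subset_image_dropLast [Finite α] (hL : FactorClosed L) (i : ℕ) :
    rightExtendableWords L i ⊆ List.dropLast '' rightExtendableWords L (i + 1) := by
  rintro u ⟨hu, hue⟩
  obtain ⟨a, ha⟩ := hue.exists_append_singleton hL
  exact ⟨u ++ [a], ⟨by simp [hu], ha⟩, List.dropLast_concat⟩

theorem ncard_rightExtendableWords_le_succ [Finite α] (hL : FactorClosed L) (i : ℕ) :
    (rightExtendableWords L i).ncard ≤ (rightExtendableWords L (i + 1)).ncard :=
  (Set.ncard_le_ncard (rightExtendableWords_subset_image_dropLast hL i)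
    ((finite_rightExtendableWords _).image _)).trans
    (Set.ncard_image_le (finite_rightExtendableWords _))

theorem injOn_dropLast_rightExtendableWords [Finite α] (hL : FactorClosed L) {J : ℕ}
    (hJ : (rightExtendableWords L (J + 1)).ncard ≤ (rightExtendableWords L J).ncard) :
    Set.InjOn List.dropLast (rightExtendableWords L (J + 1)) := by
  refine Set.injOn_of_ncard_image_eq (le_antisymm
    (Set.ncard_image_le (finite_rightExtendableWords _)) (hJ.trans ?_))
    (finite_rightExtendableWords _)
  exact Set.ncard_le_ncard (rightExtendableWords_subset_image_dropLast hL J)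
    ((finite_rightExtendableWords _).image _)

theorem eq_of_take_eq_of_forall_infix_mem {P : Set (List α)} (hP : Set.InjOn List.dropLast P)
    {J : ℕ} {x y : List α} (hlen : x.length = y.length) (htake : x.take J = y.take J)
    (hx : ∀ w, w <:+: x → w.length = J + 1 → w ∈ P)
    (hy : ∀ w, w <:+: y → w.length = J + 1 → w ∈ P) : x = y := by
  induction x using List.reverseRecOn generalizing y with
  | nil => exact (List.length_eq_zero_iff.1 hlen.symm).symm
  | append_singleton x a ih =>
    obtain rfl | ⟨y, b, rfl⟩ := y.eq_nil_or_concat'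
    · simp at hlen
    have hlen' : x.length = y.length := by simpa using hlen
    rcases le_or_gt (x.length + 1) J with hJ | hJ
    · rwa [List.take_of_length_le (by simpa using hJ),
        List.take_of_length_le (by simp; omega)] at htake
    have hxy : x = y := ih hlen'
      (by rwa [List.take_append_of_le_length (by omega),
        List.take_append_of_le_length (by omega)] at htake)
      (fun w hw => hx w (hw.trans (List.prefix_append x [a]).isInfix))
      (fun w hw => hy w (hw.trans (List.prefix_append y [b]).isInfix))
    subst hxy
    have hwindow : ∀ c, x.drop (x.length - J) ++ [c] <:+: x ++ [c] := fun c =>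
      List.IsSuffix.isInfix
        ⟨x.take (x.length - J), by rw [← List.append_assoc, List.take_append_drop]⟩
    have hlast : x.drop (x.length - J) ++ [a] = x.drop (x.length - J) ++ [b] :=
      hP (hx _ (hwindow a) (by simp; omega)) (hy _ (hwindow b) (by simp; omega)) (by simp)
    simpa using hlast

theorem bddAbove_ncard_wordsOfLength [Finite α] (hL : FactorClosed L)
    (hR : BddAbove (Set.range fun i => (rightExtendableWords L i).ncard)) :
    BddAbove (Set.range fun i => (wordsOfLength L i).ncard) := by
  obtain ⟨J, hJ⟩ := exists_succ_le_of_bddAbove_range hR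
  have hinj := injOn_dropLast_rightExtendableWords hL hJ
  obtain ⟨T, hT⟩ := exists_rightExtendable_of_append_mem hL (J + 1)
  have hwin : ∀ u ∈ L, T ≤ u.length → ∀ w, w <:+: u.take (u.length - T) → w.length = J + 1 →
      w ∈ rightExtendableWords L (J + 1) := by
    rintro u hu hTu w ⟨s, t, hst⟩ hw
    refine ⟨hw, hT w (t ++ u.drop (u.length - T)) hw (by simp; omega) (hL ⟨s, [], ?_⟩ hu)⟩
    rw [List.append_nil, ← List.append_assoc, ← List.append_assoc, hst, List.take_append_drop]
  refine ⟨{p : List α × List α | p.1.length ≤ J ∧ p.2.length ≤ T}.ncard, ?_⟩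
  rintro _ ⟨i, rfl⟩
  refine Set.ncard_le_ncard_of_injOn (fun u => (u.take J, u.drop (i - T)))
    (fun u hu => ⟨by simp, by simp [hu.2]; omega⟩) ?_
    ((List.finite_length_le α J).prod (List.finite_length_le α T))
  -- a word of `L` of length `i` is determined by its first `J` and its last `T` letters
  rintro u ⟨hu, rfl⟩ v ⟨hv, hvu⟩ huv
  simp only [Prod.mk.injEq] at huv
  rcases lt_or_ge u.length T with hlt | hle
  · simpa [Nat.sub_eq_zero_of_le hlt.le] using huv.2
  rw [← u.take_append_drop (u.length - T), ← v.take_append_drop (u.length - T), huv.2]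
  congr 1
  refine eq_of_take_eq_of_forall_infix_mem hinj (by simp [hvu]) ?_ (hwin u hu hle)
    (hvu ▸ hwin v hv (hvu ▸ hle))
  rw [List.take_take, min_comm, ← List.take_take, huv.1, List.take_take, min_comm,
    ← List.take_take]

theorem ncard_rightExtendableWords_le_ncard_wordsOfLength [Finite α] (i : ℕ) :
    (rightExtendableWords L i).ncard ≤ (wordsOfLength L i).ncard :=
  Set.ncard_le_ncard (fun _ hu => ⟨hu.2.mem, hu.1⟩)
    ((List.finite_length_eq α i).subset fun _ hu => hu.2)

theorem bddAbove_ncard_rightExtendableWords_iff_leftExtendableWords [Finite α]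
    (hL : FactorClosed L) :
    BddAbove (Set.range fun i => (rightExtendableWords L i).ncard) ↔
      BddAbove (Set.range fun i => (leftExtendableWords L i).ncard) := by
  simp only [ncard_leftExtendableWords]
  constructor
  · intro hR
    refine (bddAbove_ncard_wordsOfLength hL hR).range_mono _ fun i => ?_
    rw [← ncard_wordsOfLength_reverse_preimage]
    exact ncard_rightExtendableWords_le_ncard_wordsOfLength i
  · intro hR
    refine (bddAbove_ncard_wordsOfLength hL.reverse_preimage hR).range_mono _ fun i => ?_
    rw [ncard_wordsOfLength_reverse_preimage]
    exact ncard_rightExtendableWords_le_ncard_wordsOfLength i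

theorem monotone_ncard_rightExtendableWords [Finite α] (hL : FactorClosed L) :
    Monotone fun i => (rightExtendableWords L i).ncard :=
  monotone_nat_of_le_succ (ncard_rightExtendableWords_le_succ hL)

theorem monotone_ncard_leftExtendableWords [Finite α] (hL : FactorClosed L) :
    Monotone fun i => (leftExtendableWords L i).ncard := by
  simpa only [ncard_leftExtendableWords] using
    monotone_ncard_rightExtendableWords hL.reverse_preimage

end Words

section MonomialAlgebra

def goodWords (W : Set (List (Fin m))) : Set (List (Fin m)) :=
  {w | ∀ u ∈ W, ¬ u <:+: w}

def badSupported (W : Set (List (Fin m))) : Submodule F (FreeAlg F m) where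
  carrier := {f | ∀ x : FreeMonoid (Fin m), x.toList ∈ goodWords W → f.coeff x = 0}
  add_mem' hf hg x hx := by simp [hf x hx, hg x hx]
  zero_mem' x _ := rfl
  smul_mem' c f hf x hx := by simp [hf x hx]

variable {F} {W : Set (List (Fin m))}

theorem factorClosed_goodWords : FactorClosed (goodWords W) :=
  fun _ _ huw hw v hv hvu => hw v hv (hvu.trans huw)

theorem mul_mem_badSupported_right {f : FreeAlg F m} (hf : f ∈ badSupported F W)
    (g : FreeAlg F m) : f * g ∈ badSupported F W := by
  classical
  intro x hx
  by_contra hne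
  obtain ⟨y, hy, z, -, rfl⟩ :=
    Finset.mem_mul.1 (MonoidAlgebra.support_coeff_mul_subset f g (Finsupp.mem_support_iff.2 hne))
  refine Finsupp.mem_support_iff.1 hy (hf y (factorClosed_goodWords ?_ hx))
  rw [FreeMonoid.toList_mul]
  exact (List.prefix_append _ _).isInfix

theorem mul_mem_badSupported_left {f : FreeAlg F m} (hf : f ∈ badSupported F W)
    (g : FreeAlg F m) : g * f ∈ badSupported F W := by
  classical
  intro x hx
  by_contra hne
  obtain ⟨y, -, z, hz, rfl⟩ :=
    Finset.mem_mul.1 (MonoidAlgebra.support_coeff_mul_subset g f (Finsupp.mem_support_iff.2 hne))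
  refine Finsupp.mem_support_iff.1 hz (hf z (factorClosed_goodWords ?_ hx))
  rw [FreeMonoid.toList_mul]
  exact (List.suffix_append _ _).isInfix

theorem sub_mem_badSupported_of_rel {a b : FreeAlg F m} (h : RingQuot.Rel (monRel F W) a b) :
    a - b ∈ badSupported F W := by
  induction h with
  | of h =>
    obtain ⟨⟨u, hu, rfl⟩, rfl⟩ := h
    intro x hx
    have hux : FreeMonoid.ofList u ≠ x := by
      rintro rfl
      exact hx _ hu (List.infix_refl _)
    simp [wordElem, MonoidAlgebra.coeff_single, hux]
  | add_left _ ih => simpa using ih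
  | mul_left _ ih => simpa [sub_mul] using mul_mem_badSupported_right ih _
  | mul_right _ ih => simpa [mul_sub] using mul_mem_badSupported_left ih _

theorem mem_badSupported_of_monAlgPi_eq_zero {f : FreeAlg F m} (h : monAlgPi F W f = 0) :
    f ∈ badSupported F W := by
  have hq : Quot.mk (RingQuot.Rel (monRel F W)) f = Quot.mk _ 0 := by
    have := congrArg RingQuot.toQuot h
    simpa [monAlgPi, RingQuot.mkAlgHom_def, RingQuot.mkRingHom_def, ← RingQuot.zero_quot] using this
  have := Relation.EqvGen.mono (p := (badSupported F W).quotientRel)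
    (fun a b hab => (Submodule.quotientRel_def _).2 (sub_mem_badSupported_of_rel hab)) _ _
    (Quot.eqvGen_exact hq)
  simpa using
    (Submodule.quotientRel_def _).1 ((badSupported F W).quotientRel.iseqv.eqvGen_iff.1 this)

theorem mono_mul (u v : List (Fin m)) : mono F W u * mono F W v = mono F W (u ++ v) := by
  simp only [mono, wordElem, ← map_mul, MonoidAlgebra.of_apply, MonoidAlgebra.single_mul_single,
    one_mul, FreeMonoid.ofList_append]

theorem mono_eq_zero_of_notMem_goodWords {w : List (Fin m)} (hw : w ∉ goodWords W) :
    mono F W w = 0 := by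
  simp only [goodWords, Set.mem_ofPred_eq, not_forall, not_not] at hw
  obtain ⟨u, hu, s, t, rfl⟩ := hw
  have hu0 : mono F W u = 0 :=
    (RingQuot.mkAlgHom_rel F (s := monRel F W) ⟨⟨u, hu, rfl⟩, rfl⟩).trans (map_zero _)
  rw [← mono_mul, ← mono_mul, hu0, mul_zero, zero_mul]

variable (F) in
theorem exists_linearMap_mono_eq_ite {w : List (Fin m)} (hw : w ∈ goodWords W) :
    ∃ φ : MonAlg F W →ₗ[F] F, ∀ u, φ (mono F W u) = if u = w then 1 else 0 := by
  let π := (monAlgPi F W).toLinearMap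
  let c : FreeAlg F m →ₗ[F] F :=
    Finsupp.lapply (FreeMonoid.ofList w) ∘ₗ (MonoidAlgebra.coeffLinearEquiv F).toLinearMap
  have hker : LinearMap.ker π ≤ LinearMap.ker c :=
    fun f hf => mem_badSupported_of_monAlgPi_eq_zero hf _ hw
  refine ⟨(LinearMap.ker π).liftQ c hker ∘ₗ
    (π.quotKerEquivOfSurjective (RingQuot.mkAlgHom_surjective F _)).symm.toLinearMap, fun u => ?_⟩
  have : (π.quotKerEquivOfSurjective (RingQuot.mkAlgHom_surjective F _)).symm (mono F W u) =
      Submodule.Quotient.mk (wordElem F u) :=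
    π.quotKerEquivOfSurjective_symm_apply _ (wordElem F u)
  classical
  simp [this, c, wordElem, Finsupp.single_apply]

theorem mono_mem_homog {u : List (Fin m)} {d : ℕ} (hu : u.length = d) :
    mono F W u ∈ homog F W d :=
  Submodule.subset_span ⟨u, hu, rfl⟩

theorem forall_mul_homog_eq_zero_iff {f : MonAlg F W} {d : ℕ} :
    (∀ g ∈ homog F W d, f * g = 0) ↔ ∀ v : List (Fin m), v.length = d → f * mono F W v = 0 := by
  refine ⟨fun h v hv => h _ (mono_mem_homog hv), fun h g hg => ?_⟩
  induction hg using Submodule.span_induction with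
  | mem x hx => obtain ⟨v, hv, rfl⟩ := hx; exact h v hv
  | zero => exact mul_zero f
  | add x y _ _ hx hy => rw [mul_add, hx, hy, add_zero]
  | smul a x _ hx => rw [mul_smul_comm, hx, smul_zero]

theorem forall_homog_mul_eq_zero_iff {f : MonAlg F W} {d : ℕ} :
    (∀ g ∈ homog F W d, g * f = 0) ↔ ∀ v : List (Fin m), v.length = d → mono F W v * f = 0 := by
  refine ⟨fun h v hv => h _ (mono_mem_homog hv), fun h g hg => ?_⟩
  induction hg using Submodule.span_induction with
  | mem x hx => obtain ⟨v, hv, rfl⟩ := hx; exact h v hv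
  | zero => exact zero_mul f
  | add x y _ _ hx hy => rw [add_mul, hx, hy, add_zero]
  | smul a x _ hx => rw [smul_mul_assoc, hx, smul_zero]

theorem forall_mul_homog_eq_zero_of_le {f : MonAlg F W} {d e : ℕ} (hde : d ≤ e)
    (h : ∀ g ∈ homog F W d, f * g = 0) : ∀ g ∈ homog F W e, f * g = 0 := by
  refine forall_mul_homog_eq_zero_iff.2 fun v hv => ?_
  rw [← v.take_append_drop d, ← mono_mul, ← mul_assoc,
    h _ (mono_mem_homog (by simp; omega)), zero_mul]

theorem forall_homog_mul_eq_zero_of_le {f : MonAlg F W} {d e : ℕ} (hde : d ≤ e)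
    (h : ∀ g ∈ homog F W d, g * f = 0) : ∀ g ∈ homog F W e, g * f = 0 := by
  refine forall_homog_mul_eq_zero_iff.2 fun v hv => ?_
  rw [← v.take_append_drop (e - d), ← mono_mul, mul_assoc,
    h _ (mono_mem_homog (by simp; omega)), mul_zero]

variable (F W) in
def proRight : Submodule F (MonAlg F W) where
  carrier := proSet F (MonAlg F W) (homog F W)
  zero_mem' := ⟨1, le_rfl, fun g _ => zero_mul g⟩
  add_mem' := by
    rintro a b ⟨d, hd, ha⟩ ⟨e, -, hb⟩
    refine ⟨max d e, hd.trans (le_max_left d e), fun g hg => ?_⟩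
    rw [add_mul, forall_mul_homog_eq_zero_of_le (le_max_left d e) ha g hg,
      forall_mul_homog_eq_zero_of_le (le_max_right d e) hb g hg, add_zero]
  smul_mem' := by
    rintro c a ⟨d, hd, ha⟩
    exact ⟨d, hd, fun g hg => by rw [smul_mul_assoc, ha g hg, smul_zero]⟩

variable (F W) in
def proLeft : Submodule F (MonAlg F W) where
  carrier := proSetLeft F (MonAlg F W) (homog F W)
  zero_mem' := ⟨1, le_rfl, fun g _ => mul_zero g⟩
  add_mem' := by
    rintro a b ⟨d, hd, ha⟩ ⟨e, -, hb⟩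
    refine ⟨max d e, hd.trans (le_max_left d e), fun g hg => ?_⟩
    rw [mul_add, forall_homog_mul_eq_zero_of_le (le_max_left d e) ha g hg,
      forall_homog_mul_eq_zero_of_le (le_max_right d e) hb g hg, add_zero]
  smul_mem' := by
    rintro c a ⟨d, hd, ha⟩
    exact ⟨d, hd, fun g hg => by rw [mul_smul_comm, ha g hg, smul_zero]⟩

theorem span_proSet : Submodule.span F (proSet F (MonAlg F W) (homog F W)) = proRight F W :=
  le_antisymm (Submodule.span_le.2 fun _ h => h) fun _ h => Submodule.subset_span h

theorem span_proSetLeft :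
    Submodule.span F (proSetLeft F (MonAlg F W) (homog F W)) = proLeft F W :=
  le_antisymm (Submodule.span_le.2 fun _ h => h) fun _ h => Submodule.subset_span h

theorem mono_mem_proSet_of_not_rightExtendable {u : List (Fin m)}
    (hu : ¬ RightExtendable (goodWords W) u) :
    mono F W u ∈ proSet F (MonAlg F W) (homog F W) := by
  simp only [RightExtendable, not_forall, not_exists, not_and] at hu
  obtain ⟨d, hd⟩ := hu
  refine ⟨d + 1, d.succ_pos, forall_mul_homog_eq_zero_iff.2 fun v hv => ?_⟩
  rw [mono_mul]
  refine mono_eq_zero_of_notMem_goodWords fun h =>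
    hd (v.take d) (by simp; omega) (factorClosed_goodWords.mem_of_append_left (v := v.drop d) ?_)
  rwa [List.append_assoc, List.take_append_drop]

theorem mono_mem_proSetLeft_of_not_leftExtendable {u : List (Fin m)}
    (hu : ¬ LeftExtendable (goodWords W) u) :
    mono F W u ∈ proSetLeft F (MonAlg F W) (homog F W) := by
  simp only [LeftExtendable, not_forall, not_exists, not_and] at hu
  obtain ⟨d, hd⟩ := hu
  refine ⟨d + 1, d.succ_pos, forall_homog_mul_eq_zero_iff.2 fun v hv => ?_⟩
  rw [mono_mul]
  refine mono_eq_zero_of_notMem_goodWords fun h =>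
    hd (v.drop 1) (by simp; omega) (factorClosed_goodWords.mem_of_append_right (u := v.take 1) ?_)
  rwa [← List.append_assoc, List.take_append_drop]

theorem linearIndependent_mkQ_mono_rightExtendableWords (i : ℕ) :
    LinearIndependent F fun u : rightExtendableWords (goodWords W) i =>
      (Submodule.span F (proSet F (MonAlg F W) (homog F W))).mkQ (mono F W u) := by
  have := (finite_rightExtendableWords (L := goodWords W) i).fintype
  rw [Fintype.linearIndependent_iff]
  intro c hc u₀
  have hmem : ∑ u, c u • mono F W u ∈ proRight F W := by
    rw [← span_proSet, ← Submodule.Quotient.mk_eq_zero, ← Submodule.mkQ_apply, map_sum]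
    simpa using hc
  obtain ⟨d, -, hd⟩ := hmem
  obtain ⟨v, hv, hgood⟩ := u₀.2.2 d
  obtain ⟨φ, hφ⟩ := exists_linearMap_mono_eq_ite F hgood
  simpa [Finset.sum_mul, smul_mul_assoc, mono_mul, hφ, Subtype.coe_inj] using
    congrArg φ (hd _ (mono_mem_homog hv))

theorem linearIndependent_mkQ_mono_leftExtendableWords (i : ℕ) :
    LinearIndependent F fun u : leftExtendableWords (goodWords W) i =>
      (Submodule.span F (proSetLeft F (MonAlg F W) (homog F W))).mkQ (mono F W u) := by
  have := (finite_leftExtendableWords (L := goodWords W) i).fintype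
  rw [Fintype.linearIndependent_iff]
  intro c hc u₀
  have hmem : ∑ u, c u • mono F W u ∈ proLeft F W := by
    rw [← span_proSetLeft, ← Submodule.Quotient.mk_eq_zero, ← Submodule.mkQ_apply, map_sum]
    simpa using hc
  obtain ⟨d, -, hd⟩ := hmem
  obtain ⟨v, hv, hgood⟩ := u₀.2.2 d
  obtain ⟨φ, hφ⟩ := exists_linearMap_mono_eq_ite F hgood
  simpa [Finset.mul_sum, mul_smul_comm, mono_mul, hφ, Subtype.coe_inj] using
    congrArg φ (hd _ (mono_mem_homog hv))

theorem finrank_map_mkQ_homog {P : Submodule F (MonAlg F W)} {S : Set (List (Fin m))} {i : ℕ}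
    (hS : ∀ u ∈ S, u.length = i) (hP : ∀ u, u.length = i → u ∉ S → mono F W u ∈ P)
    (hind : LinearIndependent F fun u : S => P.mkQ (mono F W u)) :
    Module.finrank F ((homog F W i).map P.mkQ) = S.ncard := by
  have := ((List.finite_length_eq _ i).subset hS).fintype
  have hspan : (homog F W i).map P.mkQ =
      Submodule.span F (Set.range fun u : S => P.mkQ (mono F W u)) := by
    rw [homog, Submodule.map_span]
    refine le_antisymm (Submodule.span_le.2 ?_) (Submodule.span_mono ?_)
    · rintro _ ⟨_, ⟨u, hu, rfl⟩, rfl⟩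
      by_cases huS : u ∈ S
      · exact Submodule.subset_span ⟨⟨u, huS⟩, rfl⟩
      · simp [(Submodule.Quotient.mk_eq_zero P).2 (hP u hu huS)]
    · rintro _ ⟨u, rfl⟩
      exact ⟨mono F W u, ⟨u, hS u u.2, rfl⟩, rfl⟩
  rw [hspan, finrank_span_eq_card hind, ← Nat.card_eq_fintype_card, Nat.card_coe_set_eq]

theorem quotGrowth_proSet (n : ℕ) :
    quotGrowth F W (proSet F (MonAlg F W) (homog F W)) n =
      ∑ i ∈ Finset.range (n + 1), (rightExtendableWords (goodWords W) i).ncard :=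
  Finset.sum_congr rfl fun i _ => finrank_map_mkQ_homog (fun _ hu => hu.1)
    (fun _ hu huS => Submodule.subset_span
      (mono_mem_proSet_of_not_rightExtendable fun h => huS ⟨hu, h⟩))
    (linearIndependent_mkQ_mono_rightExtendableWords i)

theorem quotGrowth_proSetLeft (n : ℕ) :
    quotGrowth F W (proSetLeft F (MonAlg F W) (homog F W)) n =
      ∑ i ∈ Finset.range (n + 1), (leftExtendableWords (goodWords W) i).ncard :=
  Finset.sum_congr rfl fun i _ => finrank_map_mkQ_homog (fun _ hu => hu.1)
    (fun _ hu huS => Submodule.subset_span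
      (mono_mem_proSetLeft_of_not_leftExtendable fun h => huS ⟨hu, h⟩))
    (linearIndependent_mkQ_mono_leftExtendableWords i)

end MonomialAlgebra

theorem statement9_general (F : Type) [Field F] (m : ℕ) (W : Set (List (Fin m))) :
    (∃ C : ℕ, ∀ n : ℕ, 1 ≤ n →
        quotGrowth F W (proSetLeft F (MonAlg F W) (homog F W)) n ≤ C * n) ↔
      (∃ C : ℕ, ∀ n : ℕ, 1 ≤ n →
        quotGrowth F W (proSet F (MonAlg F W) (homog F W)) n ≤ C * n) := by
  have hL : FactorClosed (goodWords W) := factorClosed_goodWords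
  simp only [quotGrowth_proSetLeft, quotGrowth_proSet,
    (monotone_ncard_leftExtendableWords hL).exists_sum_range_le_mul_iff_bddAbove,
    (monotone_ncard_rightExtendableWords hL).exists_sum_range_le_mul_iff_bddAbove]
  exact (bddAbove_ncard_rightExtendableWords_iff_leftExtendableWords hL).symm

/-- For a finitely generated infinite-dimensional monomial algebra
`A`, the quotient `A/pro_l(A)` has linear growth if and only if `A/pro_r(A)` has
linear growth. -/
theorem statement9 (F : Type) [Field F] (m : ℕ) (W : Set (List (Fin m)))
    (hinf : ¬ Module.Finite F (MonAlg F W)) :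
    (∃ C : ℕ, ∀ n : ℕ, 1 ≤ n →
        quotGrowth F W (proSetLeft F (MonAlg F W) (homog F W)) n ≤ C * n) ↔
      (∃ C : ℕ, ∀ n : ℕ, 1 ≤ n →
        quotGrowth F W (proSet F (MonAlg F W) (homog F W)) n ≤ C * n) :=
  statement9_general F m W
end
end

section
/- Let A be a connected ℕ-graded F-algebra generated in degree 1 with dim_F A_1 < ∞, and let M = ⊕_{i≥0} F·v_i and M' = ⊕_{i≥0} F·w_i be point A-modules. Then every isomorphism φ : M → M' of (ungraded) right A-modules is graded of degree 0; that is, φ(M_i) = M'_i for every i ≥ 0. -/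
/-!
Write `φ (v n)` in the basis `v'`. Since `v n = v 0 · a` for some `a ∈ A_n`, the vector
`φ (v n) = φ (v 0) · a` only involves the `v' j` with `j ≥ n`. At the other end, if `T` is the
leading index of `φ (v n)`, pick `x ∈ A_1` acting nontrivially on both `v n` and `v' T`
(`A_{n+1} = A_n A_1` forces `v n · A_1 ≠ 0`, and two proper subgroups never cover `A_1`);
then `φ (v (n+1))` is a nonzero multiple of `φ (v n) · x`, whose leading index is `T + 1`.
Hence the leading index of `φ (v n)` is `n + N` for a constant `N`, likewise `n + N'` for
`φ⁻¹`, and `φ⁻¹ ∘ φ = id` forces `N + N' = 0`, so `φ (v n) ∈ F · v' n`.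
-/

open MulOpposite

namespace Module.Basis

variable {ι R M M' : Type*} [CommSemiring R] [AddCommMonoid M] [Module R M]
  [AddCommMonoid M'] [Module R M']

theorem repr_map_apply {κ : Type*} (b : Basis ι R M) (b' : Basis κ R M') (f : M →ₗ[R] M')
    (x : M) (k : κ) :
    b'.repr (f x) k = (b.repr x).sum fun j c => c * b'.repr (f (b j)) k := by
  conv_lhs => rw [← b.linearCombination_repr x]
  simp only [Finsupp.linearCombination_apply, map_finsuppSum, map_smul, Finsupp.sum_apply,
    Finsupp.coe_smul, Pi.smul_apply, smul_eq_mul]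

theorem eq_repr_smul_of_forall_ne (b : Basis ι R M) {N : ι} {x : M}
    (h : ∀ k, k ≠ N → b.repr x k = 0) : x = b.repr x N • b N := by
  apply b.repr.injective
  ext k
  by_cases hk : k = N
  · simp [hk]
  · simp [h k hk, Ne.symm hk]

section LinearOrder

variable [LinearOrder ι]

def IsLeadingIndex (b : Basis ι R M) (N : ι) (x : M) : Prop :=
  b.repr x N ≠ 0 ∧ ∀ k, N < k → b.repr x k = 0

variable {b : Basis ι R M}

theorem IsLeadingIndex.unique {N N' : ι} {x : M} (h : b.IsLeadingIndex N x)
    (h' : b.IsLeadingIndex N' x) : N = N' := by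
  by_contra hne
  rcases lt_or_gt_of_ne hne with hlt | hlt
  · exact h'.1 (h.2 N' hlt)
  · exact h.1 (h'.2 N hlt)

theorem exists_isLeadingIndex {x : M} (hx : x ≠ 0) : ∃ N, b.IsLeadingIndex N x := by
  have hne : (b.repr x).support.Nonempty := by simpa using hx
  refine ⟨_, Finsupp.mem_support_iff.1 (Finset.max'_mem _ hne), fun k hk => ?_⟩
  by_contra h
  exact (Finset.le_max' _ k (Finsupp.mem_support_iff.2 h)).not_gt hk

theorem isLeadingIndex_self [Nontrivial R] (i : ι) : b.IsLeadingIndex i (b i) := by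
  refine ⟨by simp, fun k hk => ?_⟩
  simp [hk.ne]

theorem IsLeadingIndex.smul [NoZeroDivisors R] {N : ι} {x : M} (h : b.IsLeadingIndex N x)
    {c : R} (hc : c ≠ 0) : b.IsLeadingIndex N (c • x) := by
  refine ⟨by simpa using ⟨hc, h.1⟩, fun k hk => ?_⟩
  simp [h.2 k hk]

end LinearOrder

theorem IsLeadingIndex.map [NoZeroDivisors R] {b : Basis ℕ R M} {b' : Basis ℕ R M'}
    {f : M →ₗ[R] M'} {s N : ℕ} {x : M}
    (hf : ∀ j k, j + s < k → b'.repr (f (b j)) k = 0) (hN : b'.repr (f (b N)) (N + s) ≠ 0)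
    (hx : b.IsLeadingIndex N x) : b'.IsLeadingIndex (N + s) (f x) := by
  have hsupp : ∀ j ∈ (b.repr x).support, j ≤ N := fun j hj =>
    not_lt.1 fun hlt => Finsupp.mem_support_iff.1 hj (hx.2 j hlt)
  refine ⟨?_, fun k hk => ?_⟩
  · rw [repr_map_apply b b', Finsupp.sum, Finset.sum_eq_single N]
    · exact mul_ne_zero hx.1 hN
    · intro j hj hjN
      rw [hf j _ (by have := hsupp j hj; omega), mul_zero]
    · intro hN'
      rw [Finsupp.notMem_support_iff.1 hN', zero_mul]
  · rw [repr_map_apply b b', Finsupp.sum]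
    refine Finset.sum_eq_zero fun j hj => ?_
    rw [hf j k (by have := hsupp j hj; omega), mul_zero]

end Module.Basis

theorem exists_op_smul_ne_zero_and_op_smul_ne_zero {A M M' : Type*} [Semiring A]
    [AddCommMonoid M] [Module Aᵐᵒᵖ M] [AddCommMonoid M'] [Module Aᵐᵒᵖ M'] {S : AddSubmonoid A}
    {m : M} {m' : M'}
    (h : ∃ x ∈ S, op x • m ≠ 0) (h' : ∃ x ∈ S, op x • m' ≠ 0) :
    ∃ x ∈ S, op x • m ≠ 0 ∧ op x • m' ≠ 0 := by
  obtain ⟨x, hxS, hx⟩ := h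
  obtain ⟨y, hyS, hy⟩ := h'
  by_cases hxm' : op x • m' = 0
  · by_cases hym : op y • m = 0
    · exact ⟨x + y, S.add_mem hxS hyS, by rwa [op_add, add_smul, hym, add_zero],
        by rwa [op_add, add_smul, hxm', zero_add]⟩
    · exact ⟨y, hyS, hym, hy⟩
  · exact ⟨x, hxS, hx, hxm'⟩

section PointModule

variable {F A : Type*} [Field F] [Ring A] [Algebra F A] {𝒜 : ℕ → Submodule F A}
  {M M' : Type*} [AddCommGroup M] [Module F M] [Module Aᵐᵒᵖ M]
  [AddCommGroup M'] [Module F M'] [Module Aᵐᵒᵖ M']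

variable (𝒜) in
def IsGradedBasis (b : Module.Basis ℕ F M) : Prop :=
  ∀ i d, ∀ x ∈ 𝒜 d, ∃ c : F, op x • b i = c • b (i + d)

namespace IsGradedBasis

variable {b : Module.Basis ℕ F M}

theorem repr_smul_basis_apply_of_ne (hb : IsGradedBasis 𝒜 b) {x : A} {d : ℕ} (hx : x ∈ 𝒜 d)
    (i : ℕ) {k : ℕ} (hk : k ≠ i + d) : b.repr (op x • b i) k = 0 := by
  obtain ⟨c, hc⟩ := hb i d x hx
  simp [hc, hk.symm]

theorem exists_mem_smul_basis_zero_eq [DirectSum.Decomposition 𝒜] (hb : IsGradedBasis 𝒜 b)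
    (hcyc : ∀ w : M, ∃ a : A, op a • b 0 = w) (n : ℕ) : ∃ a ∈ 𝒜 n, op a • b 0 = b n := by
  classical
  obtain ⟨a, ha⟩ := hcyc (b n)
  set a' := DirectSum.decompose 𝒜 a
  obtain ⟨c, hc⟩ := hb 0 n _ (a' n).2
  refine ⟨a' n, (a' n).2, ?_⟩
  -- only the degree-`n` component of `a` contributes to the `n`-th coordinate of `b 0 · a`
  have hcoeff : b.repr (op (a' n : A) • b 0) n = 1 := by
    have h := congrArg (fun w => b.repr w n) ha
    simp only [Module.Basis.repr_self, Finsupp.single_eq_same] at h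
    rw [← h, ← DirectSum.sum_support_decompose 𝒜 a, Finset.op_sum, Finset.sum_smul, map_sum,
      Finsupp.finsetSum_apply, Finset.sum_eq_single n]
    · intro d _ hd
      exact hb.repr_smul_basis_apply_of_ne (a' d).2 0 (by omega)
    · intro hn
      simp [DFinsupp.notMem_support_iff.1 hn]
  rw [hc, zero_add] at hcoeff ⊢
  simp only [map_smul, Module.Basis.repr_self, Finsupp.smul_apply, Finsupp.single_eq_same,
    smul_eq_mul, mul_one] at hcoeff
  rw [hcoeff, one_smul]

variable [IsScalarTower F Aᵐᵒᵖ M]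

theorem repr_smul_apply_of_lt (hb : IsGradedBasis 𝒜 b) {x : A} {d : ℕ} (hx : x ∈ 𝒜 d)
    (w : M) {k : ℕ} (hk : k < d) : b.repr (op x • w) k = 0 := by
  rw [← DistribSMul.toLinearMap_apply F M (op x), Module.Basis.repr_map_apply b b, Finsupp.sum]
  refine Finset.sum_eq_zero fun j _ => ?_
  rw [DistribSMul.toLinearMap_apply, hb.repr_smul_basis_apply_of_ne hx j (by omega), mul_zero]

theorem exists_mem_one_smul_ne_zero [DirectSum.Decomposition 𝒜] (hb : IsGradedBasis 𝒜 b)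
    (hcyc : ∀ w : M, ∃ a : A, op a • b 0 = w) {n : ℕ} (hgen : 𝒜 (n + 1) ≤ 𝒜 n * 𝒜 1) :
    ∃ x ∈ 𝒜 1, op x • b n ≠ 0 := by
  by_contra! h
  obtain ⟨a, ha, hab⟩ := hb.exists_mem_smul_basis_zero_eq hcyc (n + 1)
  refine b.ne_zero (n + 1) (hab ▸ Submodule.mul_induction_on (hgen ha) ?_ ?_)
  · intro p hp q hq
    obtain ⟨c, hc⟩ := hb 0 n p hp
    rw [op_mul, mul_smul, hc, zero_add, smul_comm, h q hq, smul_zero]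
  · intro x y hx hy
    rw [op_add, add_smul, hx, hy, add_zero]

end IsGradedBasis

variable [DirectSum.Decomposition 𝒜] [IsScalarTower F Aᵐᵒᵖ M']
  {b : Module.Basis ℕ F M} {b' : Module.Basis ℕ F M'}

theorem repr_map_basis_apply_of_lt (hb : IsGradedBasis 𝒜 b)
    (hcyc : ∀ w : M, ∃ a : A, op a • b 0 = w) (hb' : IsGradedBasis 𝒜 b') (φ : M →ₗ[Aᵐᵒᵖ] M')
    {n k : ℕ} (hk : k < n) : b'.repr (φ (b n)) k = 0 := by
  obtain ⟨a, ha, hab⟩ := hb.exists_mem_smul_basis_zero_eq hcyc n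
  rw [← hab, map_smul]
  exact hb'.repr_smul_apply_of_lt ha _ hk

variable [IsScalarTower F Aᵐᵒᵖ M]

theorem isLeadingIndex_map_basis_succ (hgen : ∀ n, 𝒜 (n + 1) ≤ 𝒜 n * 𝒜 1)
    (hb : IsGradedBasis 𝒜 b) (hcyc : ∀ w : M, ∃ a : A, op a • b 0 = w)
    (hb' : IsGradedBasis 𝒜 b') (hcyc' : ∀ w : M', ∃ a : A, op a • b' 0 = w)
    (φ : M →ₗ[Aᵐᵒᵖ] M') {n T : ℕ} (h : b'.IsLeadingIndex T (φ (b n))) :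
    b'.IsLeadingIndex (T + 1) (φ (b (n + 1))) := by
  obtain ⟨x, hx, hxn, hxT⟩ :=
    exists_op_smul_ne_zero_and_op_smul_ne_zero (S := (𝒜 1).toAddSubmonoid)
      (hb.exists_mem_one_smul_ne_zero hcyc (hgen n))
      (hb'.exists_mem_one_smul_ne_zero hcyc' (hgen T))
  obtain ⟨α, hα⟩ := hb n 1 x hx
  obtain ⟨γ, hγ⟩ := hb' T 1 x hx
  have hα0 : α ≠ 0 := by rintro rfl; exact hxn (by rw [hα, zero_smul])
  have hγ0 : γ ≠ 0 := by rintro rfl; exact hxT (by rw [hγ, zero_smul])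
  have hxφ : b'.IsLeadingIndex (T + 1) (op x • φ (b n)) :=
    h.map (f := DistribSMul.toLinearMap F M' (op x))
      (fun j k hk => hb'.repr_smul_basis_apply_of_ne hx j hk.ne') (by simpa [hγ] using hγ0)
  have hφ : φ (b (n + 1)) = α⁻¹ • op x • φ (b n) := by
    rw [← map_smul, hα, LinearMap.map_smul_of_tower, inv_smul_smul₀ hα0]
  rw [hφ]
  exact hxφ.smul (inv_ne_zero hα0)

theorem exists_isLeadingIndex_map_basis (hgen : ∀ n, 𝒜 (n + 1) ≤ 𝒜 n * 𝒜 1)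
    (hb : IsGradedBasis 𝒜 b) (hcyc : ∀ w : M, ∃ a : A, op a • b 0 = w)
    (hb' : IsGradedBasis 𝒜 b') (hcyc' : ∀ w : M', ∃ a : A, op a • b' 0 = w)
    (φ : M ≃ₗ[Aᵐᵒᵖ] M') : ∃ N, ∀ n, b'.IsLeadingIndex (n + N) (φ (b n)) := by
  obtain ⟨N, hN⟩ := Module.Basis.exists_isLeadingIndex (b := b')
    ((map_ne_zero_iff φ φ.injective).2 (b.ne_zero 0))
  refine ⟨N, fun n => ?_⟩
  induction n with
  | zero => simpa using hN
  | succ n ih =>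
    rw [add_right_comm]
    exact isLeadingIndex_map_basis_succ hgen hb hcyc hb' hcyc' φ.toLinearMap ih

end PointModule

theorem statement10_general (F : Type) [Field F] (A : Type) [Ring A] [Algebra F A]
    (𝒜 : ℕ → Submodule F A) [GradedAlgebra 𝒜]
    (hgen : ∀ n : ℕ, 𝒜 (n + 1) = 𝒜 1 * 𝒜 n ∧ 𝒜 (n + 1) = 𝒜 n * 𝒜 1)
    (M : Type) [AddCommGroup M] [Module F M] [Module Aᵐᵒᵖ M] [IsScalarTower F Aᵐᵒᵖ M]
    (M' : Type) [AddCommGroup M'] [Module F M'] [Module Aᵐᵒᵖ M'] [IsScalarTower F Aᵐᵒᵖ M']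
    (v : ℕ → M) (v' : ℕ → M')
    -- the `v i` (resp. `v' i`) form an `F`-basis, so each homogeneous component
    -- `F·v i` is one-dimensional:
    (hind : LinearIndependent F v) (hspan : Submodule.span F (Set.range v) = ⊤)
    (hind' : LinearIndependent F v') (hspan' : Submodule.span F (Set.range v') = ⊤)
    -- the modules are graded: `v i · A_d ⊆ F · v (i+d)`:
    (hgr : ∀ (i d : ℕ), ∀ x ∈ 𝒜 d, ∃ c : F, MulOpposite.op x • v i = c • v (i + d))
    (hgr' : ∀ (i d : ℕ), ∀ x ∈ 𝒜 d, ∃ c : F, MulOpposite.op x • v' i = c • v' (i + d))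
    -- the modules are generated in degree `0` by `v 0` (resp. `v' 0`):
    (hcyc : ∀ x : M, ∃ a : A, MulOpposite.op a • v 0 = x)
    (hcyc' : ∀ x : M', ∃ a : A, MulOpposite.op a • v' 0 = x)
    -- `φ` is an isomorphism of (ungraded) right `A`-modules:
    (φ : M ≃ₗ[Aᵐᵒᵖ] M') :
    ∀ i : ℕ, ∃ c : F, c ≠ 0 ∧ φ (v i) = c • v' i := by
  obtain ⟨b, rfl⟩ : ∃ b : Module.Basis ℕ F M, ⇑b = v :=
    ⟨.mk hind hspan.ge, Module.Basis.coe_mk _ _⟩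
  obtain ⟨b', rfl⟩ : ∃ b' : Module.Basis ℕ F M', ⇑b' = v' :=
    ⟨.mk hind' hspan'.ge, Module.Basis.coe_mk _ _⟩
  have hgen₁ n := (hgen n).2.le
  obtain ⟨N, hN⟩ := exists_isLeadingIndex_map_basis hgen₁ hgr hcyc hgr' hcyc' φ
  obtain ⟨N', hN'⟩ := exists_isLeadingIndex_map_basis hgen₁ hgr' hcyc' hgr hcyc φ.symm
  -- `φ.symm ∘ φ` raises leading indices by `N + N'`, yet it is the identity
  have hNN' : 0 + N + N' = 0 := by
    have h := (hN 0).map (f := (φ.symm : M' →ₗ[Aᵐᵒᵖ] M).restrictScalars F)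
      (fun j k hk => (hN' j).2 k hk) (hN' _).1
    simp only [LinearMap.restrictScalars_apply, LinearEquiv.coe_coe,
      LinearEquiv.symm_apply_apply] at h
    exact h.unique (Module.Basis.isLeadingIndex_self 0)
  intro i
  have hi : b'.IsLeadingIndex i (φ (b i)) := by simpa [show N = 0 by omega] using hN i
  refine ⟨_, hi.1, b'.eq_repr_smul_of_forall_ne fun k hk => hk.lt_or_gt.elim ?_ (hi.2 k)⟩
  exact repr_map_basis_apply_of_lt hgr hcyc hgr' φ.toLinearMap

/-- Let `A` be a connected ℕ-graded `F`-algebra generated in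
degree `1` with `dim_F A_1 < ∞`, and let `M = ⊕ F·v_i` and `M' = ⊕ F·v'_i` be right
point `A`-modules (right modules are modules over `Aᵐᵒᵖ`).  Then every isomorphism
`φ : M → M'` of ungraded right `A`-modules is graded of degree `0`; since the
homogeneous components are the lines `F·v_i` and `F·v'_i`, this says that
`φ (v i) = c • v' i` for a nonzero scalar `c`. -/
theorem statement10 (F : Type) [Field F] (A : Type) [Ring A] [Algebra F A]
    (𝒜 : ℕ → Submodule F A) [GradedAlgebra 𝒜]
    (hconn : 𝒜 0 = Submodule.span F {1})
    (hgen : ∀ n : ℕ, 𝒜 (n + 1) = 𝒜 1 * 𝒜 n ∧ 𝒜 (n + 1) = 𝒜 n * 𝒜 1)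
    (hfin1 : Module.Finite F (𝒜 1))
    (M : Type) [AddCommGroup M] [Module F M] [Module Aᵐᵒᵖ M] [IsScalarTower F Aᵐᵒᵖ M]
    (M' : Type) [AddCommGroup M'] [Module F M'] [Module Aᵐᵒᵖ M'] [IsScalarTower F Aᵐᵒᵖ M']
    (v : ℕ → M) (v' : ℕ → M')
    -- the `v i` (resp. `v' i`) form an `F`-basis, so each homogeneous component
    -- `F·v i` is one-dimensional:
    (hind : LinearIndependent F v) (hspan : Submodule.span F (Set.range v) = ⊤)
    (hind' : LinearIndependent F v') (hspan' : Submodule.span F (Set.range v') = ⊤)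
    -- the modules are graded: `v i · A_d ⊆ F · v (i+d)`:
    (hgr : ∀ (i d : ℕ), ∀ x ∈ 𝒜 d, ∃ c : F, MulOpposite.op x • v i = c • v (i + d))
    (hgr' : ∀ (i d : ℕ), ∀ x ∈ 𝒜 d, ∃ c : F, MulOpposite.op x • v' i = c • v' (i + d))
    -- the modules are generated in degree `0` by `v 0` (resp. `v' 0`):
    (hcyc : ∀ x : M, ∃ a : A, MulOpposite.op a • v 0 = x)
    (hcyc' : ∀ x : M', ∃ a : A, MulOpposite.op a • v' 0 = x)
    -- `φ` is an isomorphism of (ungraded) right `A`-modules: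
    (φ : M ≃ₗ[Aᵐᵒᵖ] M') :
    ∀ i : ℕ, ∃ c : F, c ≠ 0 ∧ φ (v i) = c • v' i :=
  statement10_general F A 𝒜 hgen M M' v v' hind hspan hind' hspan' hgr hgr' hcyc hcyc' φ
end

section
/- Let w be a uniformly recurrent right-infinite word over Σ = {x_1, …, x_n} in which every letter of Σ occurs, and let A = A_w (equivalently, A is a projectively simple monomial algebra with non-redundant presentation). Then every graded F-algebra automorphism φ of A is a composition of a torus action with a permutation of the generators: there exist λ_1, …, λ_n ∈ F^× and a permutation σ ∈ S_n such that φ(x_i) = λ_i x_{σ(i)} for every 1 ≤ i ≤ n. -/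
noncomputable section

open scoped BigOperators

variable (F : Type) [Field F] {m : ℕ}

/-!
Let `A = A_w` act on functions of words, a letter `j` sending `f` to `b :: q ↦ [j = b] f q` on
factors `b :: q` of `w` (and to `0` elsewhere); evaluating at the indicator of the empty word gives
coefficient functionals on `A`. Writing `φ(x_a) = ∑ₑ c a e • x_e`, the coefficient of a factor `v`
in `φ(x_{u₁} ⋯ x_{uₖ})` is `∏ᵢ c uᵢ vᵢ`. So if `g` picks a nonzero entry `c (g e) e` in every
column, the letterwise image `g v` of each factor `v` is a factor; by uniform recurrence a long
such `g v` contains every letter, so every such `g` is surjective. The columns of `c` are nonzero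
because `φ` is bijective on the finite-dimensional degree-one part, and a matrix with nonzero
columns all of whose choice functions are surjective is a permutation matrix up to scalars.
-/

open Function

structure IsFactorial {α : Type*} (L : Set (List α)) : Prop where
  nil_mem : [] ∈ L
  mem_of_infix : ∀ ⦃u v : List α⦄, u <:+: v → v ∈ L → u ∈ L

theorem isFactorial_factorsOf (w : ℕ → Fin m) : IsFactorial (factorsOf w) where
  nil_mem := ⟨0, rfl⟩
  mem_of_infix := by
    rintro u v ⟨s, t, rfl⟩ ⟨i, hi⟩
    refine ⟨i + s.length, List.ext_getElem (by simp) fun k hk _ => ?_⟩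
    have := List.getElem_of_eq hi (i := s.length + k) (by simp; omega)
    simp only [List.getElem_append_left (by simp; omega : s.length + k < (s ++ u).length),
      List.getElem_append_right (by simp : s.length ≤ s.length + k)] at this
    simpa [Nat.add_assoc] using this

theorem singleton_mem_factorsOf {w : ℕ → Fin m} (hall : ∀ j, ∃ i, w i = j) (a : Fin m) :
    [a] ∈ factorsOf w := by
  obtain ⟨i, hi⟩ := hall a
  exact ⟨i, by simp [hi]⟩

theorem surjective_of_map_mem_factorsOf {w : ℕ → Fin m} (hur : UniformlyRecurrent w)
    (hall : ∀ j, ∃ i, w i = j) {g : Fin m → Fin m}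
    (hg : ∀ v ∈ factorsOf w, v.map g ∈ factorsOf w) : Surjective g := by
  intro j
  obtain ⟨C, hC⟩ := hur [j] (singleton_mem_factorsOf hall j)
  have hv : (List.range C).map (fun k => w (0 + k)) ∈ factorsOf w := ⟨0, by simp⟩
  obtain ⟨x, -, hx⟩ := List.mem_map.1 <|
    (hC _ (hg _ hv) (by simp)).subset (List.mem_singleton_self j)
  exact ⟨x, hx⟩

section Representation

variable (L : Set (List (Fin m)))

open scoped Classical in
def prependOp (j : Fin m) : Module.End F (List (Fin m) → F) :=
  LinearMap.pi fun
    | [] => 0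
    | b :: q => if j = b ∧ b :: q ∈ L then LinearMap.proj q else 0

def wordRep : FreeAlg F m →ₐ[F] Module.End F (List (Fin m) → F) :=
  MonoidAlgebra.lift F _ _ (FreeMonoid.lift (prependOp F L))

variable {L}

-- The disjunct `u = []` is there because the empty word acts as the identity, also off `L`.
open scoped Classical in
theorem wordRep_wordElem_apply (hL : IsFactorial L) (u : List (Fin m)) (f : List (Fin m) → F)
    (v : List (Fin m)) :
    wordRep F L (wordElem F u) f v =
      if u <+: v ∧ (u = [] ∨ v ∈ L) then f (v.drop u.length) else 0 := by
  rw [wordRep, wordElem, MonoidAlgebra.lift_of, FreeMonoid.lift_ofList]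
  induction u generalizing v with
  | nil => simp
  | cons a u ih =>
    rw [List.map_cons, List.prod_cons, Module.End.mul_apply]
    rcases v with _ | ⟨b, q⟩
    · simp [prependOp]
    · by_cases hq : a = b ∧ b :: q ∈ L
      · simp [prependOp, hq, ih, hL.mem_of_infix (List.suffix_cons b q).isInfix hq.2]
      · simp only [prependOp, LinearMap.pi_apply, if_neg hq, LinearMap.zero_apply,
          List.cons_prefix_cons]
        exact (if_neg (by tauto)).symm

theorem wordRep_wordElem_of_notMem (hL : IsFactorial L) {u : List (Fin m)} (hu : u ∉ L) :
    wordRep F L (wordElem F u) = 0 := by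
  ext f v
  rw [wordRep_wordElem_apply F hL]
  refine if_neg fun ⟨huv, h⟩ => ?_
  rcases h with rfl | hv
  · exact hu hL.nil_mem
  · exact hu (hL.mem_of_infix huv.isInfix hv)

def monRep (hL : IsFactorial L) : MonAlg F Lᶜ →ₐ[F] Module.End F (List (Fin m) → F) :=
  RingQuot.liftAlgHom F ⟨wordRep F L, by
    rintro _ _ ⟨⟨u, hu, rfl⟩, rfl⟩
    rw [map_zero, wordRep_wordElem_of_notMem F hL hu]⟩

def coeff (hL : IsFactorial L) (v : List (Fin m)) : MonAlg F Lᶜ →ₗ[F] F :=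
  LinearMap.proj v ∘ₗ LinearMap.applyₗ (Pi.single [] 1) ∘ₗ (monRep F hL).toLinearMap

end Representation

section MonomialAlgebra

variable (W : Set (List (Fin m)))

theorem mono_nil : mono F W [] = 1 := by
  rw [mono, wordElem, FreeMonoid.ofList_nil, map_one, map_one]

theorem mono_append (u v : List (Fin m)) : mono F W (u ++ v) = mono F W u * mono F W v := by
  rw [mono, mono, mono, wordElem, wordElem, wordElem, FreeMonoid.ofList_append, map_mul, map_mul]

theorem mono_cons (a : Fin m) (u : List (Fin m)) : mono F W (a :: u) = mono F W [a] * mono F W u :=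
  mono_append F W [a] u

theorem mono_singleton_mem_homog_one (a : Fin m) : mono F W [a] ∈ homog F W 1 :=
  Submodule.subset_span ⟨[a], rfl, rfl⟩

theorem homog_one_eq_span : homog F W 1 = Submodule.span F (Set.range fun a => mono F W [a]) := by
  rw [homog]
  congr 1
  ext x
  simp [List.length_eq_one_iff, eq_comm]

variable {W}

theorem mono_eq_zero {u : List (Fin m)} (hu : u ∈ W) : mono F W u = 0 :=
  (RingQuot.mkAlgHom_rel F ⟨⟨u, hu, rfl⟩, rfl⟩).trans (map_zero _)

end MonomialAlgebra

section Coefficients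

variable {L : Set (List (Fin m))} (hL : IsFactorial L)

theorem monRep_mono (u : List (Fin m)) : monRep F hL (mono F Lᶜ u) = wordRep F L (wordElem F u) :=
  RingQuot.liftAlgHom_mkAlgHom_apply _ _ _ _

theorem coeff_mono {u v : List (Fin m)} (hv : v ∈ L) :
    coeff F hL v (mono F Lᶜ u) = if u = v then 1 else 0 := by
  simp only [coeff, LinearMap.coe_comp, comp_apply, AlgHom.toLinearMap_apply,
    LinearMap.applyₗ_apply_apply, LinearMap.proj_apply, monRep_mono, wordRep_wordElem_apply F hL,
    Pi.single_apply, List.drop_eq_nil_iff]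
  have hpre : u <+: v ∧ v.length ≤ u.length ↔ u = v :=
    ⟨fun h => h.1.eq_of_length (le_antisymm h.1.length_le h.2), by rintro rfl; simp⟩
  simp only [hv, or_true, and_true, ← ite_and, hpre]

theorem coeff_cons_mul {b : Fin m} {q : List (Fin m)} (hv : b :: q ∈ L) (e : Fin m)
    (y : MonAlg F Lᶜ) :
    coeff F hL (b :: q) (mono F Lᶜ [e] * y) = if e = b then coeff F hL q y else 0 := by
  have hrep : monRep F hL (mono F Lᶜ [e]) = prependOp F L e := by
    rw [monRep_mono, wordRep, wordElem, MonoidAlgebra.lift_of, FreeMonoid.lift_ofList]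
    simp
  simp only [coeff, LinearMap.coe_comp, comp_apply, AlgHom.toLinearMap_apply, map_mul,
    LinearMap.applyₗ_apply_apply, LinearMap.proj_apply, Module.End.mul_apply, hrep, prependOp,
    LinearMap.pi_apply, hv, and_true]
  split_ifs <;> rfl

theorem coeff_cons_sum_mul {b : Fin m} {q : List (Fin m)} (hv : b :: q ∈ L) (γ : Fin m → F)
    (y : MonAlg F Lᶜ) :
    coeff F hL (b :: q) ((∑ e, γ e • mono F Lᶜ [e]) * y) = γ b * coeff F hL q y := by
  simp [Finset.sum_mul, coeff_cons_mul F hL hv]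

theorem coeff_sum_smul_mono_singleton {b : Fin m} (hb : [b] ∈ L) (γ : Fin m → F) :
    coeff F hL [b] (∑ e, γ e • mono F Lᶜ [e]) = γ b := by
  rw [← mul_one (∑ e, _), ← mono_nil F, coeff_cons_sum_mul F hL hb, coeff_mono F hL hL.nil_mem,
    if_pos rfl, mul_one]

theorem eq_sum_coeff_smul_of_mem_homog_one (hsing : ∀ a, [a] ∈ L) {y : MonAlg F Lᶜ}
    (hy : y ∈ homog F Lᶜ 1) : y = ∑ e, coeff F hL [e] y • mono F Lᶜ [e] := by
  rw [homog_one_eq_span] at hy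
  obtain ⟨γ, rfl⟩ := (Submodule.mem_span_range_iff_exists_fun F).1 hy
  simp only [coeff_sum_smul_mono_singleton F hL (hsing _)]

theorem coeff_map_mono (f : MonAlg F Lᶜ →ₐ[F] MonAlg F Lᶜ) (c : Fin m → Fin m → F)
    (hf : ∀ a, f (mono F Lᶜ [a]) = ∑ e, c a e • mono F Lᶜ [e]) {u v : List (Fin m)}
    (huv : u.length = v.length) (hv : v ∈ L) :
    coeff F hL v (f (mono F Lᶜ u)) = (List.zipWith c u v).prod := by
  induction u generalizing v with
  | nil =>
    obtain rfl := List.eq_nil_of_length_eq_zero huv.symm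
    rw [mono_nil, map_one, ← mono_nil F, coeff_mono F hL hv, if_pos rfl]
    rfl
  | cons a u ih =>
    obtain ⟨b, q, rfl⟩ := List.exists_cons_of_length_eq_add_one huv.symm
    rw [mono_cons, map_mul, hf, coeff_cons_sum_mul F hL hv,
      ih (by simpa using huv) (hL.mem_of_infix (List.suffix_cons b q).isInfix hv)]
    rfl

theorem map_mem_of_coeff_ne_zero (hL : IsFactorial L) (f : MonAlg F Lᶜ →ₐ[F] MonAlg F Lᶜ) (c : Fin m → Fin m → F)
    (hf : ∀ a, f (mono F Lᶜ [a]) = ∑ e, c a e • mono F Lᶜ [e]) {g : Fin m → Fin m}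
    (hg : ∀ e, c (g e) e ≠ 0) {v : List (Fin m)} (hv : v ∈ L) : v.map g ∈ L := by
  by_contra h
  have hcoeff := coeff_map_mono F hL f c hf (u := v.map g) (by simp) hv
  rw [mono_eq_zero F h, map_zero, map_zero, List.zipWith_map_left, List.zipWith_self] at hcoeff
  exact List.prod_ne_zero (by simpa using fun x _ => hg x) hcoeff.symm

theorem exists_coeff_ne_zero_of_mapsTo_homog_one (φ : MonAlg F Lᶜ ≃ₐ[F] MonAlg F Lᶜ)
    (hφ : ∀ y ∈ homog F Lᶜ 1, φ y ∈ homog F Lᶜ 1) {e : Fin m} (he : [e] ∈ L) :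
    ∃ a, coeff F hL [e] (φ (mono F Lᶜ [a])) ≠ 0 := by
  have : FiniteDimensional F (homog F Lᶜ 1) := by
    rw [homog_one_eq_span]
    exact FiniteDimensional.span_of_finite F (Set.finite_range _)
  have hinj : Injective (φ.toLinearMap.restrict hφ) := fun x y h =>
    Subtype.ext (φ.injective (congrArg Subtype.val h))
  have hsurj := (LinearMap.injective_iff_surjective (K := F) (V := homog F Lᶜ 1)).1 hinj
  obtain ⟨y, hy⟩ := hsurj ⟨mono F Lᶜ [e], mono_singleton_mem_homog_one F _ e⟩
  by_contra! h
  have hker : homog F Lᶜ 1 ≤ LinearMap.ker (coeff F hL [e] ∘ₗ φ.toLinearMap) := by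
    rw [homog_one_eq_span, Submodule.span_le]
    rintro _ ⟨a, rfl⟩
    exact h a
  have h0 : coeff F hL [e] (φ y) = 0 := hker y.2
  rw [show φ y = mono F Lᶜ [e] from congrArg Subtype.val hy, coeff_mono F hL he, if_pos rfl] at h0
  exact one_ne_zero h0

end Coefficients

theorem exists_perm_of_forall_surjective {ι : Type*} [Finite ι] (R : ι → ι → Prop)
    (hR : ∀ e, ∃ a, R a e) (hsurj : ∀ g : ι → ι, (∀ e, R (g e) e) → Surjective g) :
    ∃ σ : Equiv.Perm ι, ∀ a e, R a e ↔ a = σ e := by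
  classical
  have hbij : ∀ g : ι → ι, (∀ e, R (g e) e) → Bijective g := fun g hg =>
    ⟨Finite.injective_iff_surjective.2 (hsurj g hg), hsurj g hg⟩
  choose g hg using hR
  refine ⟨Equiv.ofBijective g (hbij g hg), fun a e => ⟨fun hae => ?_, fun h => h ▸ hg e⟩⟩
  -- Otherwise redirecting `g` at `e` to `a` gives a second choice function, which is not injective.
  by_contra hne
  obtain ⟨e', rfl⟩ := (hbij g hg).2 a
  have hee' : e' ≠ e := fun h => hne (congrArg g h)
  have hupd : ∀ x, R (update g e (g e') x) x := fun x => by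
    rcases eq_or_ne x e with rfl | hx
    · simpa using hae
    · simpa [hx] using hg x
  exact hee' ((hbij _ hupd).1 (by simp [hee']))

/-- Let `w` be a uniformly recurrent right-infinite word over
`{x_1,…,x_n}` in which every letter occurs, and `A = A_w` the associated
projectively simple monomial algebra (non-redundant presentation).  Then every
graded algebra automorphism of `A` is the composition of a torus action and a
permutation of the generators: `φ(x_i) = λ_i x_{σ(i)}` with `λ_i ∈ F^×`, `σ ∈ S_n`. -/
theorem statement12 (F : Type) [Field F] (n : ℕ) (w : ℕ → Fin n)
    (hur : UniformlyRecurrent w) (hall : ∀ j : Fin n, ∃ i : ℕ, w i = j)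
    (φ : MonAlg F ((factorsOf w)ᶜ) ≃ₐ[F] MonAlg F ((factorsOf w)ᶜ))
    (hgraded : ∀ d : ℕ, ∀ a ∈ homog F ((factorsOf w)ᶜ) d,
        φ a ∈ homog F ((factorsOf w)ᶜ) d) :
    ∃ (lam : Fin n → F) (σ : Equiv.Perm (Fin n)), (∀ i, lam i ≠ 0) ∧
      ∀ i : Fin n, φ (mono F ((factorsOf w)ᶜ) [i]) =
        lam i • mono F ((factorsOf w)ᶜ) [σ i] := by
  have hL := isFactorial_factorsOf w
  have hsing := singleton_mem_factorsOf hall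
  set c : Fin n → Fin n → F := fun a e => coeff F hL [e] (φ (mono F _ [a]))
  have hexp : ∀ a, φ (mono F _ [a]) = ∑ e, c a e • mono F _ [e] := fun a =>
    eq_sum_coeff_smul_of_mem_homog_one F hL hsing (hgraded 1 _ (mono_singleton_mem_homog_one F _ a))
  obtain ⟨σ, hσ⟩ := exists_perm_of_forall_surjective (fun a e => c a e ≠ 0)
    (fun e => exists_coeff_ne_zero_of_mapsTo_homog_one F hL φ (hgraded 1) (hsing e))
    (fun g hg => surjective_of_map_mem_factorsOf hur hall fun v hv =>
      map_mem_of_coeff_ne_zero F hL φ.toAlgHom c hexp hg hv)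
  refine ⟨fun i => c i (σ.symm i), σ.symm, fun i => (hσ _ _).2 (σ.apply_symm_apply i).symm,
    fun i => ?_⟩
  rw [hexp, Finset.sum_eq_single (σ.symm i) (fun e _ he => ?_) (by simp)]
  rw [not_not.1 (mt (hσ i e).1 fun h => he (by simp [h])), zero_smul]
end
end

section
/- Let A = F⟨x_1, …, x_m⟩/⟨w_1, …, w_r⟩ be a finitely presented monomial algebra over a field F, and let d ≥ 2 be an upper bound for the lengths of w_1, …, w_r. Then pro(A) is finitely generated as a left ideal: pro(A) is generated as a left ideal by the (finitely many) monomials of length at most d that lie in pro(A); in particular pro(A) ∩ A_{≥d} = A · (pro(A) ∩ A_d). -/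
noncomputable section

open scoped BigOperators

variable (F : Type) [Field F] {m : ℕ}

/-!
The kernel of `F⟨X⟩ → A` is spanned by the words containing a forbidden factor, so the nonzero
monomials form a basis of `A`, and comparing coefficients of `b v` shows: if `f = π b` kills
`A_k`, then every nonzero monomial `u` of `b` has all its extensions `u v` with `|v| = k` zero,
i.e. `u ∈ pro(A)`. If `|u| ≥ d`, write `u = p s` with `|s| = d`: a forbidden factor of `u v`
not inside `u` has length at most `d`, so it lies inside `s v`, hence `s ∈ pro(A) ∩ A_d` and
`u = p · s`.
-/

namespace MonomialAlgebra

variable {F} {V : Set (List (Fin m))}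

lemma wordElem_append (u v : List (Fin m)) :
    wordElem F (u ++ v) = wordElem F u * wordElem F v := by
  simp only [wordElem, FreeMonoid.ofList_append, map_mul]

lemma single_eq_smul_wordElem (w : FreeMonoid (Fin m)) (r : F) :
    (MonoidAlgebra.single w r : FreeAlg F m) = r • wordElem F w.toList := by
  rw [wordElem, FreeMonoid.ofList_toList, MonoidAlgebra.of_apply, MonoidAlgebra.smul_single',
    mul_one]

def HasForbiddenFactor (V : Set (List (Fin m))) (u : List (Fin m)) : Prop :=
  ∃ w ∈ V, w <:+: u

lemma HasForbiddenFactor.of_infix {u u' : List (Fin m)} (h : HasForbiddenFactor V u)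
    (hu : u <:+: u') : HasForbiddenFactor V u' :=
  let ⟨w, hw, hwu⟩ := h
  ⟨w, hw, hwu.trans hu⟩

/-- A forbidden factor of `p ++ s ++ v` not inside `p ++ s` reaches into `v`; being at most one
letter longer than `s`, it then starts inside `s ++ v`. -/
lemma HasForbiddenFactor.of_append_left {p s v : List (Fin m)}
    (hV : ∀ w ∈ V, w.length ≤ s.length + 1) (hps : ¬ HasForbiddenFactor V (p ++ s))
    (h : HasForbiddenFactor V (p ++ s ++ v)) : HasForbiddenFactor V (s ++ v) := by
  obtain ⟨w, hw, x, y, hxwy⟩ := h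
  have hxw : x ++ w <+: p ++ s ++ v := ⟨y, hxwy⟩
  by_cases hlen : (x ++ w).length ≤ (p ++ s).length
  · have : x ++ w <+: p ++ s := List.prefix_of_prefix_length_le hxw (List.prefix_append _ v) hlen
    exact absurd ⟨w, hw, (List.infix_append x w []).trans (by simpa using this.isInfix)⟩ hps
  · have hpx : p <+: x := by
      refine List.prefix_of_prefix_length_le
        ((List.prefix_append p s).trans (List.prefix_append _ v))
        ((List.prefix_append x w).trans hxw) ?_
      have := hV w hw
      simp only [List.length_append] at hlen
      omega
    obtain ⟨x', rfl⟩ := hpx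
    refine ⟨w, hw, x', y, List.append_cancel_left (as := p) ?_⟩
    simpa [List.append_assoc] using hxwy

variable (V) in
lemma mono_append (u v : List (Fin m)) : mono F V (u ++ v) = mono F V u * mono F V v := by
  rw [mono, mono, mono, wordElem_append, map_mul]

variable (V) in
lemma monAlgPi_eq_sum (b : FreeAlg F m) :
    monAlgPi F V b = ∑ w ∈ b.coeff.support, b.coeff w • mono F V w.toList := by
  conv_lhs => rw [← b.sum_coeff_single]
  simp only [Finsupp.sum, single_eq_smul_wordElem, map_sum, map_smul, mono]

variable (F V) in
lemma monAlgPi_surjective : Function.Surjective (monAlgPi F V) :=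
  RingQuot.mkAlgHom_surjective F (monRel F V)

lemma mono_eq_zero_of_hasForbiddenFactor {u : List (Fin m)} (h : HasForbiddenFactor V u) :
    mono F V u = 0 := by
  obtain ⟨w, hw, x, y, rfl⟩ := h
  have hw0 : mono F V w = 0 := by
    rw [mono, monAlgPi, RingQuot.mkAlgHom_rel F (s := monRel F V) ⟨⟨w, hw, rfl⟩, rfl⟩,
      map_zero]
  rw [mono_append, mono_append, hw0, mul_zero, zero_mul]

variable (F V) in
def forbiddenIdeal : TwoSidedIdeal (FreeAlg F m) :=
  let S := MonoidAlgebra.supported F F {w : FreeMonoid (Fin m) | HasForbiddenFactor V w.toList}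
  TwoSidedIdeal.mk' S S.zero_mem S.add_mem S.neg_mem
    (fun {x y} hy => by
      classical
      refine MonoidAlgebra.mem_supported.mpr fun w hw => ?_
      obtain ⟨a, -, b, hb, rfl⟩ :=
        Finset.mem_mul.mp (MonoidAlgebra.support_coeff_mul_subset x y hw)
      refine (MonoidAlgebra.mem_supported.mp hy hb).of_infix ?_
      rw [FreeMonoid.toList_mul]
      exact (List.suffix_append _ _).isInfix)
    (fun {x y} hx => by
      classical
      refine MonoidAlgebra.mem_supported.mpr fun w hw => ?_
      obtain ⟨a, ha, b, -, rfl⟩ :=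
        Finset.mem_mul.mp (MonoidAlgebra.support_coeff_mul_subset x y hw)
      refine (MonoidAlgebra.mem_supported.mp hx ha).of_infix ?_
      rw [FreeMonoid.toList_mul]
      exact (List.prefix_append _ _).isInfix)

lemma mem_forbiddenIdeal {a : FreeAlg F m} :
    a ∈ forbiddenIdeal F V ↔ ∀ w ∈ a.coeff.support, HasForbiddenFactor V w.toList := by
  rw [forbiddenIdeal, TwoSidedIdeal.mem_mk']
  exact MonoidAlgebra.mem_supported

lemma monAlgPi_eq_zero_iff {b : FreeAlg F m} :
    monAlgPi F V b = 0 ↔ ∀ w ∈ b.coeff.support, HasForbiddenFactor V w.toList := by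
  constructor
  · intro hb
    rw [← mem_forbiddenIdeal]
    let c := (forbiddenIdeal F V).ringCon
    have hrel : ∀ ⦃x y⦄, monRel F V x y → RingCon.mk' c x = RingCon.mk' c y := by
      rintro _ _ ⟨⟨u, hu, rfl⟩, rfl⟩
      refine (RingCon.eq c).mpr ((TwoSidedIdeal.mem_iff _ _).mp (mem_forbiddenIdeal.mpr ?_))
      intro w hw
      simp only [wordElem, MonoidAlgebra.of_apply, MonoidAlgebra.coeff_single,
        Finsupp.support_single _ one_ne_zero, Finset.mem_singleton] at hw
      rw [hw, FreeMonoid.toList_ofList]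
      exact ⟨u, hu, List.infix_refl u⟩
    let q := RingQuot.lift ⟨RingCon.mk' c, hrel⟩
    have h : q (RingQuot.mkRingHom (monRel F V) b) = 0 := by
      rw [← map_zero q, ← RingQuot.mkAlgHom_coe F]
      exact congrArg q hb
    rw [RingQuot.lift_mkRingHom_apply] at h
    exact (TwoSidedIdeal.mem_iff _ _).mpr ((RingCon.eq c).mp h)
  · intro hb
    rw [monAlgPi_eq_sum]
    refine Finset.sum_eq_zero fun w hw => ?_
    rw [mono_eq_zero_of_hasForbiddenFactor (hb w hw), smul_zero]

/-- The coefficient of `w v` in `b v` is that of `w` in `b`, and a word with nonzero coefficient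
in an element of the kernel has a forbidden factor. -/
lemma hasForbiddenFactor_append_of_mul_mono_eq_zero {b : FreeAlg F m} {w : FreeMonoid (Fin m)}
    (hw : w ∈ b.coeff.support) {v : List (Fin m)} (h : monAlgPi F V b * mono F V v = 0) :
    HasForbiddenFactor V (w.toList ++ v) := by
  rw [mono, ← map_mul, monAlgPi_eq_zero_iff] at h
  have hwv : w * FreeMonoid.ofList v ∈ (b * wordElem F v).coeff.support := by
    rw [wordElem, MonoidAlgebra.of_apply, Finsupp.mem_support_iff,
      MonoidAlgebra.coeff_mul_single_mul, mul_one]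
    exact Finsupp.mem_support_iff.mp hw
  simpa using h _ hwv

lemma mono_mem_homog {u : List (Fin m)} {k : ℕ} (hu : u.length = k) :
    mono F V u ∈ homog F V k :=
  Submodule.subset_span ⟨u, hu, rfl⟩

lemma mul_homog_eq_zero_of_le {f : MonAlg F V} {k l : ℕ} (h : ∀ g ∈ homog F V k, f * g = 0)
    (hkl : k ≤ l) : ∀ g ∈ homog F V l, f * g = 0 := by
  suffices homog F V l ≤ LinearMap.ker (LinearMap.mulLeft F f) from fun g hg => this hg
  refine Submodule.span_le.mpr ?_
  rintro _ ⟨v, rfl, rfl⟩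
  rw [SetLike.mem_coe, LinearMap.mem_ker, LinearMap.mulLeft_apply, ← List.take_append_drop k v,
    mono_append, ← mul_assoc, h _ (mono_mem_homog (by simpa using hkl)), zero_mul]

variable (V) in
def proIdeal : Ideal (MonAlg F V) where
  carrier := proSet F (MonAlg F V) (homog F V)
  zero_mem' := ⟨1, le_rfl, fun g _ => zero_mul g⟩
  add_mem' := by
    rintro x y ⟨k, hk, hx⟩ ⟨l, -, hy⟩
    refine ⟨max k l, hk.trans (le_max_left _ _), fun g hg => ?_⟩
    rw [add_mul, mul_homog_eq_zero_of_le hx (le_max_left _ _) g hg,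
      mul_homog_eq_zero_of_le hy (le_max_right _ _) g hg, add_zero]
  smul_mem' := by
    rintro c x ⟨k, hk, hx⟩
    exact ⟨k, hk, fun g hg => by rw [smul_eq_mul, mul_assoc, hx g hg, mul_zero]⟩

lemma mono_mem_proSet {u : List (Fin m)} {k : ℕ} (hk : 1 ≤ k)
    (h : ∀ v : List (Fin m), v.length = k → HasForbiddenFactor V (u ++ v)) :
    mono F V u ∈ proSet F (MonAlg F V) (homog F V) := by
  refine ⟨k, hk, fun g hg => ?_⟩
  suffices homog F V k ≤ LinearMap.ker (LinearMap.mulLeft F (mono F V u)) from this hg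
  refine Submodule.span_le.mpr ?_
  rintro _ ⟨v, hv, rfl⟩
  rw [SetLike.mem_coe, LinearMap.mem_ker, LinearMap.mulLeft_apply, ← mono_append]
  exact mono_eq_zero_of_hasForbiddenFactor (h v hv)

lemma mono_mul_mem_span_ge {d : ℕ} (w : List (Fin m)) {x : MonAlg F V}
    (hx : x ∈ Submodule.span F {a | ∃ u : List (Fin m), d ≤ u.length ∧ a = mono F V u}) :
    mono F V w * x ∈
      Submodule.span F {a | ∃ u : List (Fin m), d ≤ u.length ∧ a = mono F V u} := by
  refine Submodule.span_induction (fun a ha => ?_) (by simp) (fun a b _ _ ha hb => ?_)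
    (fun c a _ ha => ?_) hx
  · obtain ⟨u, hu, rfl⟩ := ha
    rw [← mono_append]
    exact Submodule.subset_span ⟨w ++ u, by simp only [List.length_append]; omega, rfl⟩
  · rw [mul_add]
    exact Submodule.add_mem _ ha hb
  · rw [mul_smul_comm]
    exact Submodule.smul_mem _ c ha

variable (V) in
def geDegreeIdeal (d : ℕ) : Ideal (MonAlg F V) where
  __ := Submodule.span F {a | ∃ u : List (Fin m), d ≤ u.length ∧ a = mono F V u}
  smul_mem' r x hx := by
    obtain ⟨b, rfl⟩ := monAlgPi_surjective F V r
    rw [smul_eq_mul, monAlgPi_eq_sum, Finset.sum_mul]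
    exact Submodule.sum_mem _ fun w _ => by
      rw [smul_mul_assoc]
      exact Submodule.smul_mem _ _ (mono_mul_mem_span_ge _ hx)

lemma exists_monAlgPi_eq_of_mem_span {Q : List (Fin m) → Prop} {f : MonAlg F V}
    (hf : f ∈ Submodule.span F {a | ∃ u, Q u ∧ a = mono F V u}) :
    ∃ b : FreeAlg F m, monAlgPi F V b = f ∧ ∀ w ∈ b.coeff.support, Q w.toList := by
  have hle : Submodule.span F {a | ∃ u, Q u ∧ a = mono F V u} ≤
      (MonoidAlgebra.supported F F {w | Q w.toList}).map (monAlgPi F V).toLinearMap := by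
    refine Submodule.span_le.mpr ?_
    rintro _ ⟨u, hu, rfl⟩
    refine ⟨wordElem F u, MonoidAlgebra.mem_supported.mpr fun w hw => ?_, rfl⟩
    simp only [wordElem, MonoidAlgebra.of_apply, MonoidAlgebra.coeff_single,
      Finsupp.support_single _ one_ne_zero, Finset.coe_singleton, Set.mem_singleton_iff] at hw
    simpa [hw] using hu
  obtain ⟨b, hb, rfl⟩ := hle hf
  exact ⟨b, rfl, fun w hw => MonoidAlgebra.mem_supported.mp hb hw⟩

lemma monAlgPi_mem_of_mem_proSet {I : Ideal (MonAlg F V)} {Q : List (Fin m) → Prop}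
    {b : FreeAlg F m} (hb : monAlgPi F V b ∈ proSet F (MonAlg F V) (homog F V))
    (hQ : ∀ w ∈ b.coeff.support, Q w.toList)
    (hI : ∀ (u : List (Fin m)) (k : ℕ), 1 ≤ k → Q u → ¬ HasForbiddenFactor V u →
      (∀ v : List (Fin m), v.length = k → HasForbiddenFactor V (u ++ v)) → mono F V u ∈ I) :
    monAlgPi F V b ∈ I := by
  obtain ⟨k, hk, hkill⟩ := hb
  rw [monAlgPi_eq_sum]
  refine Submodule.sum_mem _ fun w hw => I.smul_of_tower_mem _ ?_
  by_cases hw' : HasForbiddenFactor V w.toList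
  · rw [mono_eq_zero_of_hasForbiddenFactor hw']
    exact I.zero_mem
  · exact hI _ k hk (hQ w hw) hw' fun v hv =>
      hasForbiddenFactor_append_of_mul_mono_eq_zero hw (hkill _ (mono_mem_homog hv))

lemma exists_suffix_mem_proSet {d : ℕ} (hV : ∀ w ∈ V, w.length ≤ d) {u : List (Fin m)}
    (hu : ¬ HasForbiddenFactor V u) (hdu : d ≤ u.length) {k : ℕ} (hk : 1 ≤ k)
    (hkill : ∀ v : List (Fin m), v.length = k → HasForbiddenFactor V (u ++ v)) :
    ∃ p s : List (Fin m), u = p ++ s ∧ s.length = d ∧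
      mono F V s ∈ proSet F (MonAlg F V) (homog F V) := by
  refine ⟨u.take (u.length - d), u.drop (u.length - d), (List.take_append_drop _ u).symm,
    by simp only [List.length_drop]; omega, mono_mem_proSet hk fun v hv => ?_⟩
  refine HasForbiddenFactor.of_append_left (p := u.take (u.length - d)) (fun w hw => ?_) ?_ ?_
  · simp only [List.length_drop]
    have := hV w hw
    omega
  · rwa [List.take_append_drop]
  · rw [List.take_append_drop]
    exact hkill v hv

theorem proSet_eq_span_short {d : ℕ} (hV : ∀ w ∈ V, w.length ≤ d) :
    proSet F (MonAlg F V) (homog F V) =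
      ↑(Ideal.span {a : MonAlg F V | a ∈ proSet F (MonAlg F V) (homog F V) ∧
        ∃ u : List (Fin m), u.length ≤ d ∧ a = mono F V u}) := by
  refine Set.Subset.antisymm (fun f hf => ?_)
    ((Ideal.span_le (I := proIdeal V)).mpr fun a ha => ha.1)
  obtain ⟨b, rfl⟩ := monAlgPi_surjective F V f
  refine monAlgPi_mem_of_mem_proSet (Q := fun _ => True) hf (fun _ _ => trivial)
    fun u k hk _ hu hkill => ?_
  by_cases hud : u.length ≤ d
  · exact Ideal.subset_span ⟨mono_mem_proSet hk hkill, u, hud, rfl⟩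
  · obtain ⟨p, s, rfl, hs, hspro⟩ :=
      exists_suffix_mem_proSet (F := F) hV hu (by omega) hk hkill
    rw [mono_append]
    exact Ideal.mul_mem_left _ _ (Ideal.subset_span ⟨hspro, s, hs.le, rfl⟩)

theorem proSet_inter_span_ge_eq {d : ℕ} (hV : ∀ w ∈ V, w.length ≤ d) :
    proSet F (MonAlg F V) (homog F V) ∩
        ↑(Submodule.span F
          {a : MonAlg F V | ∃ u : List (Fin m), d ≤ u.length ∧ a = mono F V u}) =
      ↑(Ideal.span (proSet F (MonAlg F V) (homog F V) ∩ ↑(homog F V d))) := by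
  refine Set.Subset.antisymm (fun f ⟨hf, hfd⟩ => ?_) ?_
  · obtain ⟨b, rfl, hb⟩ := exists_monAlgPi_eq_of_mem_span hfd
    refine monAlgPi_mem_of_mem_proSet (Q := fun u => d ≤ u.length) hf hb
      fun u k hk hdu hu hkill => ?_
    obtain ⟨p, s, rfl, hs, hspro⟩ := exists_suffix_mem_proSet (F := F) hV hu hdu hk hkill
    rw [mono_append]
    exact Ideal.mul_mem_left _ _ (Ideal.subset_span ⟨hspro, mono_mem_homog hs⟩)
  · refine (Ideal.span_le (I := proIdeal V ⊓ geDegreeIdeal V d)).mpr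
      fun a ⟨hpro, hd⟩ => ⟨hpro, ?_⟩
    refine Submodule.span_mono ?_ hd
    rintro _ ⟨u, hu, rfl⟩
    exact ⟨u, hu.ge, rfl⟩

end MonomialAlgebra

theorem statement15_general (F : Type) [Field F] (m : ℕ) (W : Finset (List (Fin m)))
    (V : Set (List (Fin m))) (hV : V = ↑W)
    (d : ℕ) (hlen : ∀ u ∈ W, u.length ≤ d) :
    (proSet F (MonAlg F V) (homog F V) =
        ↑(Ideal.span { a : MonAlg F V |
            a ∈ proSet F (MonAlg F V) (homog F V) ∧
              ∃ u : List (Fin m), u.length ≤ d ∧ a = mono F V u })) ∧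
      (proSet F (MonAlg F V) (homog F V) ∩
          ↑(Submodule.span F { a : MonAlg F V |
              ∃ u : List (Fin m), d ≤ u.length ∧ a = mono F V u }) =
        ↑(Ideal.span
            (proSet F (MonAlg F V) (homog F V) ∩ ↑(homog F V d)))) := by
  have hlenV : ∀ w ∈ V, w.length ≤ d := fun w hw => hlen w (by rwa [hV, Finset.mem_coe] at hw)
  exact ⟨MonomialAlgebra.proSet_eq_span_short hlenV,
    MonomialAlgebra.proSet_inter_span_ge_eq hlenV⟩

/-- Let `A = F⟨x_1,…,x_m⟩/⟨w_1,…,w_r⟩` be a finitely presented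
monomial algebra with all relations of length at most `d`, `d ≥ 2`.  Then `pro(A)`
is finitely generated as a left ideal: it is generated as a left ideal by the
monomials of length at most `d` lying in it; in particular,
`pro(A) ∩ A_{≥d} = A · (pro(A) ∩ A_d)`. -/
theorem statement15 (F : Type) [Field F] (m : ℕ) (W : Finset (List (Fin m)))
    (V : Set (List (Fin m))) (hV : V = ↑W)
    (d : ℕ) (hd : 2 ≤ d) (hlen : ∀ u ∈ W, u.length ≤ d) :
    (proSet F (MonAlg F V) (homog F V) =
        ↑(Ideal.span { a : MonAlg F V |
            a ∈ proSet F (MonAlg F V) (homog F V) ∧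
              ∃ u : List (Fin m), u.length ≤ d ∧ a = mono F V u })) ∧
      (proSet F (MonAlg F V) (homog F V) ∩
          ↑(Submodule.span F { a : MonAlg F V |
              ∃ u : List (Fin m), d ≤ u.length ∧ a = mono F V u }) =
        ↑(Ideal.span
            (proSet F (MonAlg F V) (homog F V) ∩ ↑(homog F V d)))) :=
  statement15_general F m W V hV d hlen
end
end
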